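/- arXiv:2504.00325 — 15 statements merged into one kernel-verified Lean document; each statement's English description precedes it below -/
import Mathlib

section
/- Let n = 2k with k ≥ 1 and let X be an n×n complex cross matrix. For each i with 0 ≤ i < k, let Y_i be the n×n matrix that agrees with the identity matrix except that its entries in positions (i,i), (i,n-1-i), (n-1-i,i), (n-1-i,n-1-i) equal the corresponding entries of X. Then X = Y_0 · Y_1 · ⋯ · Y_{k-1} (product taken in order of increasing index). -/
/-- An `n × n` complex matrix is a *cross matrix* if its nonzero entries lie
only on the main diagonal and the anti-diagonal (0-based indices). -/
def IsCrossMatrix {n : ℕ} (X : Matrix (Fin n) (Fin n) ℂ) : Prop :=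
  ∀ i j : Fin n, j ≠ i → (i : ℕ) + (j : ℕ) + 1 ≠ n → X i j = 0

/-!
A cross matrix is block diagonal for the partition of the indices into the pairs
`{i, n - 1 - i}`. For a block-diagonal matrix `X`, keeping the rows of `X` lying in a set `B` of
blocks and replacing the other rows by those of the identity gives a matrix `X_B` with
`X_B * X_C = X_{B ∪ C}` for disjoint `B` and `C`: the rows of `X_B` in `B` only see the
coordinates of `B`, on which `X_C` is the identity. So the `Yᵢ = X_{{i}}` multiply to
`X_{all blocks} = X`.
-/

namespace Matrix

variable {ι β R : Type*} [DecidableEq ι] [DecidableEq β] [Semiring R]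

def blockRestrict (blk : ι → β) (B : Finset β) (X : Matrix ι ι R) : Matrix ι ι R :=
  of fun a b => if blk a ∈ B then X a b else (1 : Matrix ι ι R) a b

variable {blk : ι → β} {X : Matrix ι ι R}

theorem blockRestrict_apply_of_block_diagonal (hX : ∀ a b, blk a ≠ blk b → X a b = 0)
    (B : Finset β) (a b : ι) :
    blockRestrict blk B X a b =
      if blk a ∈ B ∧ blk b ∈ B then X a b else (1 : Matrix ι ι R) a b := by
  by_cases ha : blk a ∈ B
  · by_cases hb : blk b ∈ B
    · simp [blockRestrict, ha, hb]
    have hab : blk a ≠ blk b := ne_of_mem_of_not_mem ha hb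
    simp [blockRestrict, ha, hb, hX a b hab, one_apply_ne (ne_of_apply_ne blk hab)]
  · simp [blockRestrict, ha]

theorem blockRestrict_of_forall_mem {B : Finset β} (hB : ∀ a, blk a ∈ B) :
    blockRestrict blk B X = X := by
  ext a b
  simp [blockRestrict, hB a]

theorem blockRestrict_mul_blockRestrict [Fintype ι] (hX : ∀ a b, blk a ≠ blk b → X a b = 0)
    {B C : Finset β} (hBC : Disjoint B C) :
    blockRestrict blk B X * blockRestrict blk C X = blockRestrict blk (B ∪ C) X := by
  ext a b
  by_cases ha : blk a ∈ B
  · have hrow : ∀ c, X a c * blockRestrict blk C X c b = X a c * (1 : Matrix ι ι R) c b := by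
      intro c
      by_cases hac : blk a = blk c
      · simp [blockRestrict, Finset.disjoint_left.1 hBC (hac ▸ ha)]
      · simp [hX a c hac]
    calc (blockRestrict blk B X * blockRestrict blk C X) a b = (X * (1 : Matrix ι ι R)) a b := by
          simp only [mul_apply, blockRestrict, of_apply, ha, if_true]
          exact Finset.sum_congr rfl fun c _ => hrow c
      _ = blockRestrict blk (B ∪ C) X a b := by simp [blockRestrict, ha]
  · calc (blockRestrict blk B X * blockRestrict blk C X) a b
        = ((1 : Matrix ι ι R) * blockRestrict blk C X) a b := by
          simp only [mul_apply, blockRestrict, of_apply, ha, if_false]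
      _ = blockRestrict blk (B ∪ C) X a b := by simp [blockRestrict, ha]

theorem prod_map_blockRestrict_singleton [Fintype ι] (hX : ∀ a b, blk a ≠ blk b → X a b = 0)
    {l : List β} (hl : l.Nodup) :
    (l.map fun i => blockRestrict blk {i} X).prod = blockRestrict blk l.toFinset X := by
  induction l with
  | nil => ext a b; simp [blockRestrict]
  | cons i l ih =>
    rw [List.nodup_cons] at hl
    rw [List.map_cons, List.prod_cons, ih hl.2, blockRestrict_mul_blockRestrict hX
      (Finset.disjoint_singleton_left.2 (List.mem_toFinset.not.2 hl.1)), List.toFinset_cons,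
      Finset.insert_eq]

end Matrix

def crossBlock {n : ℕ} (a : Fin n) : ℕ := min (a : ℕ) (n - 1 - a)

theorem crossBlock_eq_iff {n i : ℕ} (hi : 2 * i < n) (a : Fin n) :
    crossBlock a = i ↔ (a : ℕ) = i ∨ (a : ℕ) = n - 1 - i := by
  unfold crossBlock; omega

theorem IsCrossMatrix.apply_eq_zero_of_crossBlock_ne {n : ℕ} {X : Matrix (Fin n) (Fin n) ℂ}
    (hX : IsCrossMatrix X) (a b : Fin n) (hab : crossBlock a ≠ crossBlock b) : X a b = 0 :=
  hX a b (fun h => hab (h ▸ rfl)) (by unfold crossBlock at hab; omega)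

open Matrix in
theorem crossMatrix_factorization_even_general (k : ℕ)
    (X : Matrix (Fin (2 * k)) (Fin (2 * k)) ℂ) (hX : IsCrossMatrix X)
    (Y : ℕ → Matrix (Fin (2 * k)) (Fin (2 * k)) ℂ)
    (hY : ∀ i < k, ∀ a b : Fin (2 * k),
      Y i a b =
        if ((a : ℕ) = i ∨ (a : ℕ) = 2 * k - 1 - i) ∧
            ((b : ℕ) = i ∨ (b : ℕ) = 2 * k - 1 - i) then
          X a b
        else (1 : Matrix (Fin (2 * k)) (Fin (2 * k)) ℂ) a b) :
    X = ((List.range k).map Y).prod := by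
  have hblk := hX.apply_eq_zero_of_crossBlock_ne
  have hYi : ∀ i ∈ List.range k, Y i = blockRestrict crossBlock {i} X := by
    intro i hi
    rw [List.mem_range] at hi
    ext a b
    simp only [hY i hi, blockRestrict_apply_of_block_diagonal hblk, Finset.mem_singleton,
      crossBlock_eq_iff (by omega : 2 * i < 2 * k)]
  rw [List.map_congr_left hYi, prod_map_blockRestrict_singleton hblk List.nodup_range,
    List.toFinset_range, blockRestrict_of_forall_mem]
  exact fun a => Finset.mem_range.2 (by unfold crossBlock; omega)

/-- For `n = 2k`, a cross matrix factors as `X = Y₀ ⬝ Y₁ ⬝ ⋯ ⬝ Y_{k-1}`, where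
`Yᵢ` agrees with the identity except at the four positions `(i,i)`, `(i,n-1-i)`,
`(n-1-i,i)`, `(n-1-i,n-1-i)`, where it agrees with `X`. -/
theorem crossMatrix_factorization_even (k : ℕ) (hk : 1 ≤ k)
    (X : Matrix (Fin (2 * k)) (Fin (2 * k)) ℂ) (hX : IsCrossMatrix X)
    (Y : ℕ → Matrix (Fin (2 * k)) (Fin (2 * k)) ℂ)
    (hY : ∀ i < k, ∀ a b : Fin (2 * k),
      Y i a b =
        if ((a : ℕ) = i ∨ (a : ℕ) = 2 * k - 1 - i) ∧
            ((b : ℕ) = i ∨ (b : ℕ) = 2 * k - 1 - i) then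
          X a b
        else (1 : Matrix (Fin (2 * k)) (Fin (2 * k)) ℂ) a b) :
    X = ((List.range k).map Y).prod :=
  crossMatrix_factorization_even_general k X hX Y hY
end

section
/- Let n = 2k+1 with k ≥ 1 and let X be an n×n complex cross matrix. For each i with 0 ≤ i < k, let Y_i be the n×n matrix that agrees with the identity matrix except that its entries in positions (i,i), (i,n-1-i), (n-1-i,i), (n-1-i,n-1-i) equal the corresponding entries of X, and let D be the diagonal matrix that agrees with the identity except that its (k,k) entry equals X k k. Then X = Y_0 · Y_1 · ⋯ · Y_{k-1} · D. -/
/-!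
Write `P_s(X)` for the matrix that agrees with `X` on the rows indexed by `s` and with the
identity elsewhere. If `X` vanishes on `s × t`, then `P_s(X) P_t(X) = P_{s ∪ t}(X)`: rows outside
`s` pass through unchanged, and a row `a ∈ s` becomes row `a` of `X P_t(X)`, which is row `a` of
`X`. For a cross matrix every pair `{i, n - 1 - i}` is an invariant block, so `Yᵢ` and `D` are the
`P` of the pairs with `i < k` and `i = k`. These pairs partition the indices, and the product
telescopes to `P_univ(X) = X`.
-/

namespace Matrix

variable {n α : Type*} [DecidableEq n] [Semiring α]

def patchRows (X : Matrix n n α) (s : Finset n) : Matrix n n α :=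
  of fun a b => if a ∈ s then X a b else (1 : Matrix n n α) a b

def patchBlock (X : Matrix n n α) (s : Finset n) : Matrix n n α :=
  of fun a b => if a ∈ s ∧ b ∈ s then X a b else (1 : Matrix n n α) a b

@[simp]
theorem patchRows_apply (X : Matrix n n α) (s : Finset n) (a b : n) :
    patchRows X s a b = if a ∈ s then X a b else (1 : Matrix n n α) a b :=
  rfl

@[simp]
theorem patchBlock_apply (X : Matrix n n α) (s : Finset n) (a b : n) :
    patchBlock X s a b = if a ∈ s ∧ b ∈ s then X a b else (1 : Matrix n n α) a b :=
  rfl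

theorem patchBlock_eq_patchRows {X : Matrix n n α} {s : Finset n}
    (hX : ∀ a ∈ s, ∀ b ∉ s, X a b = 0) : patchBlock X s = patchRows X s := by
  ext a b
  by_cases ha : a ∈ s
  · by_cases hb : b ∈ s
    · simp [ha, hb]
    · have hab : a ≠ b := fun h => hb (h ▸ ha)
      simp [ha, hb, hX a ha b hb, one_apply_ne hab]
  · simp [ha]

variable [Fintype n]

@[simp]
theorem patchRows_univ (X : Matrix n n α) : patchRows X Finset.univ = X := by
  ext a b
  simp

theorem patchRows_mul_patchRows {X : Matrix n n α} {s t : Finset n}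
    (hX : ∀ a ∈ s, ∀ b ∈ t, X a b = 0) :
    patchRows X s * patchRows X t = patchRows X (s ∪ t) := by
  ext a b
  by_cases ha : a ∈ s
  · have hrow : ∀ c, X a c * patchRows X t c b = X a c * (1 : Matrix n n α) c b := by
      intro c
      by_cases hc : c ∈ t
      · simp [hX a ha c hc]
      · simp [hc]
    calc (patchRows X s * patchRows X t) a b = ∑ c, X a c * patchRows X t c b := by
          simp [mul_apply, ha]
      _ = ∑ c, X a c * (1 : Matrix n n α) c b := Finset.sum_congr rfl fun c _ => hrow c
      _ = patchRows X (s ∪ t) a b := by simp [← mul_apply, ha]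
  · rw [mul_apply]
    simp only [patchRows_apply X s, ha, if_false]
    rw [← mul_apply, one_mul]
    simp [ha]

theorem prod_patchRows_range {X : Matrix n n α} {s : ℕ → Finset n} {m : ℕ}
    (hX : ∀ i j, i < j → j < m → ∀ a ∈ s i, ∀ b ∈ s j, X a b = 0) :
    ((List.range m).map fun i => patchRows X (s i)).prod =
      patchRows X ((Finset.range m).biUnion s) := by
  induction m with
  | zero => ext a b; simp
  | succ m ih =>
    rw [List.range_succ, List.map_append, List.prod_append, List.map_singleton,
      List.prod_singleton, ih fun i j hij hj => hX i j hij (by omega), patchRows_mul_patchRows,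
      Finset.range_add_one, Finset.biUnion_insert, Finset.union_comm]
    intro a ha b hb
    obtain ⟨i, hi, ha⟩ := Finset.mem_biUnion.1 ha
    exact hX i m (Finset.mem_range.1 hi) (by omega) a ha b hb

end Matrix

open Matrix

def crossPair (n i : ℕ) : Finset (Fin n) :=
  Finset.univ.filter fun a => (a : ℕ) = i ∨ (a : ℕ) = n - 1 - i

theorem mem_crossPair {n i : ℕ} {a : Fin n} :
    a ∈ crossPair n i ↔ (a : ℕ) = i ∨ (a : ℕ) = n - 1 - i := by
  simp [crossPair]

theorem IsCrossMatrix.apply_eq_zero_of_mem_crossPair {n i : ℕ}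
    {X : Matrix (Fin n) (Fin n) ℂ} (hX : IsCrossMatrix X) (hi : i < n) {a b : Fin n}
    (ha : a ∈ crossPair n i) (hb : b ∉ crossPair n i) : X a b = 0 := by
  rw [mem_crossPair] at ha hb
  refine hX a b (fun h => hb (h ▸ ha)) ?_
  omega

theorem crossPair_disjoint {n i j : ℕ} (hij : i < j) (hj : 2 * j < n) :
    Disjoint (crossPair n i) (crossPair n j) := by
  rw [Finset.disjoint_left]
  intro a ha hb
  rw [mem_crossPair] at ha hb
  omega

theorem biUnion_crossPair_eq_univ (k : ℕ) :
    (Finset.range (k + 1)).biUnion (crossPair (2 * k + 1)) = Finset.univ := by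
  refine Finset.eq_univ_of_forall fun a => Finset.mem_biUnion.2 ?_
  by_cases ha : (a : ℕ) ≤ k
  · exact ⟨a, Finset.mem_range.2 (by omega), mem_crossPair.2 (Or.inl rfl)⟩
  · exact ⟨2 * k - a, Finset.mem_range.2 (by omega), mem_crossPair.2 (Or.inr (by omega))⟩

theorem IsCrossMatrix.patchBlock_crossPair {n i : ℕ} {X : Matrix (Fin n) (Fin n) ℂ}
    (hX : IsCrossMatrix X) (hi : i < n) :
    patchBlock X (crossPair n i) = patchRows X (crossPair n i) :=
  patchBlock_eq_patchRows fun _ ha _ hb => hX.apply_eq_zero_of_mem_crossPair hi ha hb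

theorem crossMatrix_factorization_odd_general (k : ℕ)
    (X : Matrix (Fin (2 * k + 1)) (Fin (2 * k + 1)) ℂ) (hX : IsCrossMatrix X)
    (Y : ℕ → Matrix (Fin (2 * k + 1)) (Fin (2 * k + 1)) ℂ)
    (hY : ∀ i < k, ∀ a b : Fin (2 * k + 1),
      Y i a b =
        if ((a : ℕ) = i ∨ (a : ℕ) = 2 * k + 1 - 1 - i) ∧
            ((b : ℕ) = i ∨ (b : ℕ) = 2 * k + 1 - 1 - i) then
          X a b
        else (1 : Matrix (Fin (2 * k + 1)) (Fin (2 * k + 1)) ℂ) a b)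
    (D : Matrix (Fin (2 * k + 1)) (Fin (2 * k + 1)) ℂ)
    (hD : ∀ a b : Fin (2 * k + 1),
      D a b =
        if (a : ℕ) = k ∧ (b : ℕ) = k then X a b
        else (1 : Matrix (Fin (2 * k + 1)) (Fin (2 * k + 1)) ℂ) a b) :
    X = ((List.range k).map Y).prod * D := by
  have hYP : (List.range k).map Y =
      (List.range k).map fun i => patchRows X (crossPair (2 * k + 1) i) := by
    refine List.map_congr_left fun i hi => ?_
    have hi : i < k := List.mem_range.1 hi
    rw [← hX.patchBlock_crossPair (by omega)]
    ext a b
    simp [hY i hi, mem_crossPair]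
  have hDP : D = patchRows X (crossPair (2 * k + 1) k) := by
    rw [← hX.patchBlock_crossPair (by omega)]
    ext a b
    simp only [hD, patchBlock_apply, mem_crossPair, show 2 * k + 1 - 1 - k = k by omega, or_self]
  have hprod :
      ((List.range (k + 1)).map fun i => patchRows X (crossPair (2 * k + 1) i)).prod = X := by
    rw [prod_patchRows_range, biUnion_crossPair_eq_univ, patchRows_univ]
    intro i j hij hj a ha b hb
    exact hX.apply_eq_zero_of_mem_crossPair (by omega) ha
      (Finset.disjoint_right.1 (crossPair_disjoint hij (by omega)) hb)
  rw [List.range_succ, List.map_append, List.prod_append, List.map_singleton,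
    List.prod_singleton] at hprod
  rw [hYP, hDP, hprod]

/-- For `n = 2k + 1`, a cross matrix factors as
`X = Y₀ ⬝ Y₁ ⬝ ⋯ ⬝ Y_{k-1} ⬝ D`, where `Yᵢ` agrees with the identity except at
the four positions `(i,i)`, `(i,n-1-i)`, `(n-1-i,i)`, `(n-1-i,n-1-i)`, where it
agrees with `X`, and `D` agrees with the identity except that `D k k = X k k`. -/
theorem crossMatrix_factorization_odd (k : ℕ) (hk : 1 ≤ k)
    (X : Matrix (Fin (2 * k + 1)) (Fin (2 * k + 1)) ℂ) (hX : IsCrossMatrix X)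
    (Y : ℕ → Matrix (Fin (2 * k + 1)) (Fin (2 * k + 1)) ℂ)
    (hY : ∀ i < k, ∀ a b : Fin (2 * k + 1),
      Y i a b =
        if ((a : ℕ) = i ∨ (a : ℕ) = 2 * k + 1 - 1 - i) ∧
            ((b : ℕ) = i ∨ (b : ℕ) = 2 * k + 1 - 1 - i) then
          X a b
        else (1 : Matrix (Fin (2 * k + 1)) (Fin (2 * k + 1)) ℂ) a b)
    (D : Matrix (Fin (2 * k + 1)) (Fin (2 * k + 1)) ℂ)
    (hD : ∀ a b : Fin (2 * k + 1),
      D a b =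
        if (a : ℕ) = k ∧ (b : ℕ) = k then X a b
        else (1 : Matrix (Fin (2 * k + 1)) (Fin (2 * k + 1)) ℂ) a b) :
    X = ((List.range k).map Y).prod * D :=
  crossMatrix_factorization_odd_general k X hX Y hY D hD
end

section
/- Let n = 2k with k ≥ 1 and let X be an n×n complex cross matrix. For each i with 0 ≤ i < k, let Y_i be the n×n matrix that agrees with the identity matrix except that its entries in positions (i,i), (i,n-1-i), (n-1-i,i), (n-1-i,n-1-i) equal the corresponding entries of X. Then X = Y_{k-1} · Y_{k-2} · ⋯ · Y_0 (product taken in order of decreasing index). -/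
/-!
`Yᵢ` is the identity outside the index pair `Sᵢ = {i, n-1-i}`, and on the rows of `Sᵢ` it is
supported in the columns of `Sᵢ`, because `X` is a cross matrix. Multiplying on the left by
such a matrix replaces the rows of `Sᵢ` by those of `Yᵢ`, provided these rows are still identity
rows. So by induction `Y_{m-1} ⋯ Y₀` agrees with `X` on the rows `a < m` and `a ≥ n - m`
and with the identity elsewhere; for `m = k` these are all rows.
-/

namespace Matrix

variable {n R : Type*} [Fintype n] [DecidableEq n] [NonAssocSemiring R]

theorem mul_apply_of_block_rows {p : n → Prop} [DecidablePred p] {M N : Matrix n n R}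
    (hM_one : ∀ a, ¬ p a → M a = (1 : Matrix n n R) a)
    (hM_zero : ∀ a c, p a → ¬ p c → M a c = 0)
    (hN : ∀ c, p c → N c = (1 : Matrix n n R) c) (a b : n) :
    (M * N) a b = if p a then M a b else N a b := by
  by_cases ha : p a
  · rw [if_pos ha]
    calc (M * N) a b = (M * (1 : Matrix n n R)) a b := by
          simp only [mul_apply]
          refine Finset.sum_congr rfl fun c _ => ?_
          by_cases hc : p c
          · rw [hN c hc]
          · rw [hM_zero a c ha hc, zero_mul, zero_mul]
      _ = M a b := by rw [mul_one]
  · rw [if_neg ha, mul_apply, hM_one a ha, ← mul_apply, one_mul]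

end Matrix

theorem IsCrossMatrix.apply_eq_zero_of_mirror_pair {n : ℕ} {X : Matrix (Fin n) (Fin n) ℂ}
    (hX : IsCrossMatrix X) {i : ℕ} (hi : i < n) {a c : Fin n}
    (ha : (a : ℕ) = i ∨ (a : ℕ) = n - 1 - i) (hc : ¬((c : ℕ) = i ∨ (c : ℕ) = n - 1 - i)) :
    X a c = 0 :=
  hX a c (by rintro rfl; exact hc ha) (by omega)

theorem prod_reverse_range_apply {k : ℕ}
    {X : Matrix (Fin (2 * k)) (Fin (2 * k)) ℂ} (hX : IsCrossMatrix X)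
    {Y : ℕ → Matrix (Fin (2 * k)) (Fin (2 * k)) ℂ}
    (hY : ∀ i < k, ∀ a b : Fin (2 * k),
      Y i a b =
        if ((a : ℕ) = i ∨ (a : ℕ) = 2 * k - 1 - i) ∧
            ((b : ℕ) = i ∨ (b : ℕ) = 2 * k - 1 - i) then
          X a b
        else (1 : Matrix (Fin (2 * k)) (Fin (2 * k)) ℂ) a b)
    {m : ℕ} (hm : m ≤ k) (a b : Fin (2 * k)) :
    (((List.range m).reverse).map Y).prod a b =
      if (a : ℕ) < m ∨ 2 * k - m ≤ (a : ℕ) then X a b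
      else (1 : Matrix (Fin (2 * k)) (Fin (2 * k)) ℂ) a b := by
  induction m generalizing a b with
  | zero => simp
  | succ m ih =>
    have hmk : m < k := hm
    set p : Fin (2 * k) → Prop := fun a ↦ (a : ℕ) = m ∨ (a : ℕ) = 2 * k - 1 - m
    have hY_one : ∀ a, ¬ p a → Y m a = (1 : Matrix (Fin (2 * k)) (Fin (2 * k)) ℂ) a :=
      fun a ha ↦ funext fun c ↦ by rw [hY m hmk, if_neg (fun h ↦ ha h.1)]
    have hY_zero : ∀ a c, p a → ¬ p c → Y m a c = 0 := fun a c ha hc ↦ by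
      rw [hY m hmk, if_neg (fun h ↦ hc h.2)]
      exact Matrix.one_apply_ne (by rintro rfl; exact hc ha)
    have hP_one : ∀ c, p c → (((List.range m).reverse).map Y).prod c =
        (1 : Matrix (Fin (2 * k)) (Fin (2 * k)) ℂ) c := fun c hc ↦ funext fun b ↦ by
      rw [ih hmk.le, if_neg (by omega)]
    rw [List.range_succ, List.reverse_append, List.map_append, List.prod_append]
    simp only [List.reverse_singleton, List.map_singleton, List.prod_singleton]
    rw [Matrix.mul_apply_of_block_rows hY_one hY_zero hP_one]
    by_cases ha : p a
    · rw [if_pos ha, if_pos (by omega), hY m hmk]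
      by_cases hb : p b
      · rw [if_pos ⟨ha, hb⟩]
      · rw [if_neg (fun h ↦ hb h.2), Matrix.one_apply_ne (by rintro rfl; exact hb ha),
          hX.apply_eq_zero_of_mirror_pair (by omega) ha hb]
    · rw [if_neg ha, ih hmk.le]
      exact if_congr (by omega) rfl rfl

theorem crossMatrix_factorization_even_rev_general (k : ℕ)
    (X : Matrix (Fin (2 * k)) (Fin (2 * k)) ℂ) (hX : IsCrossMatrix X)
    (Y : ℕ → Matrix (Fin (2 * k)) (Fin (2 * k)) ℂ)
    (hY : ∀ i < k, ∀ a b : Fin (2 * k),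
      Y i a b =
        if ((a : ℕ) = i ∨ (a : ℕ) = 2 * k - 1 - i) ∧
            ((b : ℕ) = i ∨ (b : ℕ) = 2 * k - 1 - i) then
          X a b
        else (1 : Matrix (Fin (2 * k)) (Fin (2 * k)) ℂ) a b) :
    X = (((List.range k).reverse).map Y).prod := by
  ext a b
  rw [prod_reverse_range_apply hX hY le_rfl, if_pos (by omega)]

/-- For `n = 2k`, a cross matrix factors as `X = Y_{k-1} ⬝ Y_{k-2} ⬝ ⋯ ⬝ Y₀`, where
`Yᵢ` agrees with the identity except at the four positions `(i,i)`, `(i,n-1-i)`,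
`(n-1-i,i)`, `(n-1-i,n-1-i)`, where it agrees with `X`. -/
theorem crossMatrix_factorization_even_rev (k : ℕ) (hk : 1 ≤ k)
    (X : Matrix (Fin (2 * k)) (Fin (2 * k)) ℂ) (hX : IsCrossMatrix X)
    (Y : ℕ → Matrix (Fin (2 * k)) (Fin (2 * k)) ℂ)
    (hY : ∀ i < k, ∀ a b : Fin (2 * k),
      Y i a b =
        if ((a : ℕ) = i ∨ (a : ℕ) = 2 * k - 1 - i) ∧
            ((b : ℕ) = i ∨ (b : ℕ) = 2 * k - 1 - i) then
          X a b
        else (1 : Matrix (Fin (2 * k)) (Fin (2 * k)) ℂ) a b) :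
    X = (((List.range k).reverse).map Y).prod :=
  crossMatrix_factorization_even_rev_general k X hX Y hY
end

section
/- Let n = 2k+1 with k ≥ 1 and let X be an n×n complex cross matrix. For each i with 0 ≤ i < k, let Y_i be the n×n matrix that agrees with the identity matrix except that its entries in positions (i,i), (i,n-1-i), (n-1-i,i), (n-1-i,n-1-i) equal the corresponding entries of X, and let D be the diagonal matrix that agrees with the identity except that its (k,k) entry equals X k k. Then X = D · Y_{k-1} · Y_{k-2} · ⋯ · Y_0 (the Y factors taken in order of decreasing index). -/
/-!
For `S ⊆ ι` let `P_S(X)` agree with `X` on `S × S` and with the identity elsewhere. With `E_S`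
the coordinate projection onto `S` we have `P_S(X) = E_S X E_S + (1 - E_S)`, and expanding the
product shows `P_S(X) P_T(X) = P_{S ∪ T}(X)` as soon as `S` and `T` are disjoint and
`E_S X E_T = E_T X E_S = 0`. For a cross matrix this vanishing holds whenever `S` and `T` are
moreover closed under `i ↦ n - 1 - i`. Each `Y_i` is `P` of the mirror pair `{i, n - 1 - i}` and
`D` is `P` of `{k}`, so multiplying the factors from the right fills up the band of indices
at distance less than `m` from either end of `Fin n`; `D` completes it to all of `Fin n`, and
`P_univ(X) = X`.
-/

theorem corner_add_one_sub_mul_corner_add_one_sub {R : Type*} [Ring R] {e f x : R}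
    (hef : e * f = 0) (hexf : e * x * f = 0) (hfxe : f * x * e = 0) :
    (e * x * e + (1 - e)) * (f * x * f + (1 - f)) = (e + f) * x * (e + f) + (1 - (e + f)) :=
  calc (e * x * e + (1 - e)) * (f * x * f + (1 - f))
      = e * x * (e * f) * x * f - e * x * (e * f) - e * f * x * f + e * f
          + (e * x * e + f * x * f + (1 - (e + f))) := by noncomm_ring
    _ = e * x * e + e * x * f + f * x * e + f * x * f + (1 - (e + f)) := by
        simp [hef, hexf, hfxe]
    _ = (e + f) * x * (e + f) + (1 - (e + f)) := by noncomm_ring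

namespace Matrix

variable {ι R : Type*} [DecidableEq ι]

def blockWithOne [Zero R] [One R] (S : Finset ι) (X : Matrix ι ι R) : Matrix ι ι R :=
  of fun a b => if a ∈ S ∧ b ∈ S then X a b else (1 : Matrix ι ι R) a b

@[simp]
theorem blockWithOne_univ [Fintype ι] [Zero R] [One R] (X : Matrix ι ι R) :
    blockWithOne Finset.univ X = X := by
  ext a b
  simp [blockWithOne]

@[simp]
theorem blockWithOne_empty [Zero R] [One R] (X : Matrix ι ι R) :
    blockWithOne ∅ X = 1 := by
  ext a b
  simp [blockWithOne]

def coordProj [Zero R] [One R] (S : Finset ι) : Matrix ι ι R :=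
  diagonal fun i => if i ∈ S then 1 else 0

theorem coordProj_mul_coordProj_of_disjoint [Fintype ι] [Semiring R] {S T : Finset ι}
    (hST : Disjoint S T) :
    (coordProj S : Matrix ι ι R) * coordProj T = 0 := by
  rw [coordProj, coordProj, diagonal_mul_diagonal, ← diagonal_zero]
  congr 1
  ext i
  by_cases hS : i ∈ S
  · simp [hS, Finset.disjoint_left.mp hST hS]
  · simp [hS]

theorem coordProj_union_of_disjoint [Semiring R] {S T : Finset ι} (hST : Disjoint S T) :
    (coordProj (S ∪ T) : Matrix ι ι R) = coordProj S + coordProj T := by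
  rw [coordProj, coordProj, coordProj, diagonal_add]
  congr 1
  ext i
  by_cases hS : i ∈ S
  · simp [hS, Finset.disjoint_left.mp hST hS]
  · simp [hS]

theorem coordProj_mul_mul_coordProj_eq_zero [Fintype ι] [Semiring R] {S T : Finset ι}
    {X : Matrix ι ι R} (hX : ∀ a ∈ S, ∀ b ∈ T, X a b = 0) :
    coordProj S * X * coordProj T = 0 := by
  ext a b
  by_cases ha : a ∈ S
  · by_cases hb : b ∈ T
    · simp [coordProj, hX a ha b hb]
    · simp [coordProj, hb]
  · simp [coordProj, ha]

theorem blockWithOne_eq [Fintype ι] [Ring R] (S : Finset ι) (X : Matrix ι ι R) :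
    blockWithOne S X = coordProj S * X * coordProj S + (1 - coordProj S) := by
  ext a b
  by_cases hab : a = b
  · subst hab
    by_cases ha : a ∈ S <;> simp [blockWithOne, coordProj, ha]
  · by_cases ha : a ∈ S <;> by_cases hb : b ∈ S <;>
      simp [blockWithOne, coordProj, ha, hb, hab, one_apply_ne hab]

theorem blockWithOne_mul_blockWithOne [Fintype ι] [Ring R] {S T : Finset ι} {X : Matrix ι ι R}
    (hST : Disjoint S T) (hX : ∀ a ∈ S, ∀ b ∈ T, X a b = 0 ∧ X b a = 0) :
    blockWithOne S X * blockWithOne T X = blockWithOne (S ∪ T) X := by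
  simp only [blockWithOne_eq, coordProj_union_of_disjoint hST]
  exact corner_add_one_sub_mul_corner_add_one_sub (coordProj_mul_coordProj_of_disjoint hST)
    (coordProj_mul_mul_coordProj_eq_zero fun a ha b hb => (hX a ha b hb).1)
    (coordProj_mul_mul_coordProj_eq_zero fun b hb a ha => (hX a ha b hb).2)

end Matrix

open Matrix

def mirrorPair (n i : ℕ) : Finset (Fin n) :=
  Finset.univ.filter fun a => (a : ℕ) = i ∨ (a.rev : ℕ) = i

def mirrorBand (n m : ℕ) : Finset (Fin n) :=
  Finset.univ.filter fun a => (a : ℕ) < m ∨ (a.rev : ℕ) < m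

theorem mem_mirrorPair {n i : ℕ} (hi : i < n) {a : Fin n} :
    a ∈ mirrorPair n i ↔ (a : ℕ) = i ∨ (a : ℕ) = n - 1 - i := by
  simp only [mirrorPair, Finset.mem_filter, Finset.mem_univ, true_and, Fin.val_rev]
  omega

theorem rev_mem_mirrorPair {n i : ℕ} {a : Fin n} (ha : a ∈ mirrorPair n i) :
    a.rev ∈ mirrorPair n i := by
  simp only [mirrorPair, Finset.mem_filter, Finset.mem_univ, true_and, Fin.rev_rev] at ha ⊢
  exact ha.symm

theorem rev_mem_mirrorBand {n m : ℕ} {a : Fin n} (ha : a ∈ mirrorBand n m) :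
    a.rev ∈ mirrorBand n m := by
  simp only [mirrorBand, Finset.mem_filter, Finset.mem_univ, true_and, Fin.rev_rev] at ha ⊢
  exact ha.symm

@[simp]
theorem mirrorBand_zero (n : ℕ) : mirrorBand n 0 = ∅ := by
  ext a
  simp [mirrorBand]

theorem mirrorBand_succ (n m : ℕ) : mirrorBand n (m + 1) = mirrorPair n m ∪ mirrorBand n m := by
  ext a
  simp only [mirrorBand, mirrorPair, Finset.mem_union, Finset.mem_filter, Finset.mem_univ,
    true_and]
  omega

theorem mirrorBand_eq_univ {n m : ℕ} (h : n ≤ 2 * m) : mirrorBand n m = Finset.univ := by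
  ext a
  simp only [mirrorBand, Finset.mem_filter, Finset.mem_univ, true_and, iff_true, Fin.val_rev]
  omega

theorem disjoint_mirrorPair_mirrorBand {n m : ℕ} (h : 2 * m < n) :
    Disjoint (mirrorPair n m) (mirrorBand n m) := by
  simp only [Finset.disjoint_left, mirrorBand, mirrorPair, Finset.mem_filter, Finset.mem_univ,
    true_and, Fin.val_rev]
  omega

namespace IsCrossMatrix

variable {n : ℕ} {X : Matrix (Fin n) (Fin n) ℂ}

theorem apply_eq_zero (hX : IsCrossMatrix X) {a b : Fin n} (hba : b ≠ a) (hb : b ≠ a.rev) :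
    X a b = 0 := by
  refine hX a b hba fun h => hb (Fin.ext ?_)
  rw [Fin.val_rev]
  omega

theorem apply_eq_zero_of_disjoint (hX : IsCrossMatrix X) {S T : Finset (Fin n)}
    (hS : ∀ a ∈ S, a.rev ∈ S) (hST : Disjoint S T) {a b : Fin n} (ha : a ∈ S) (hb : b ∈ T) :
    X a b = 0 :=
  hX.apply_eq_zero (fun h => Finset.disjoint_left.mp hST (h ▸ ha) hb)
    (fun h => Finset.disjoint_left.mp hST (h ▸ hS a ha) hb)

theorem blockWithOne_mul_blockWithOne (hX : IsCrossMatrix X) {S T : Finset (Fin n)}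
    (hS : ∀ a ∈ S, a.rev ∈ S) (hT : ∀ a ∈ T, a.rev ∈ T) (hST : Disjoint S T) :
    blockWithOne S X * blockWithOne T X = blockWithOne (S ∪ T) X :=
  Matrix.blockWithOne_mul_blockWithOne hST fun _ ha _ hb =>
    ⟨hX.apply_eq_zero_of_disjoint hS hST ha hb, hX.apply_eq_zero_of_disjoint hT hST.symm hb ha⟩

theorem blockWithOne_mirrorPair_mul_mirrorBand (hX : IsCrossMatrix X) {m : ℕ} (hm : 2 * m < n) :
    blockWithOne (mirrorPair n m) X * blockWithOne (mirrorBand n m) X =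
      blockWithOne (mirrorBand n (m + 1)) X := by
  rw [mirrorBand_succ]
  exact hX.blockWithOne_mul_blockWithOne (fun _ => rev_mem_mirrorPair)
    (fun _ => rev_mem_mirrorBand) (disjoint_mirrorPair_mirrorBand hm)

theorem prod_map_reverse_range (hX : IsCrossMatrix X) {m : ℕ} (hm : 2 * m ≤ n)
    (Y : ℕ → Matrix (Fin n) (Fin n) ℂ) (hY : ∀ i < m, Y i = blockWithOne (mirrorPair n i) X) :
    (((List.range m).reverse).map Y).prod = blockWithOne (mirrorBand n m) X := by
  induction m with
  | zero => simp
  | succ m ih =>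
    rw [List.range_succ, List.reverse_append, List.map_append, List.prod_append,
      List.reverse_singleton, List.map_singleton, List.prod_singleton, hY m m.lt_succ_self,
      ih (by omega) fun i hi => hY i (hi.trans m.lt_succ_self)]
    exact hX.blockWithOne_mirrorPair_mul_mirrorBand (by omega)

end IsCrossMatrix

theorem crossMatrix_factorization_odd_rev_general (k : ℕ)
    (X : Matrix (Fin (2 * k + 1)) (Fin (2 * k + 1)) ℂ) (hX : IsCrossMatrix X)
    (Y : ℕ → Matrix (Fin (2 * k + 1)) (Fin (2 * k + 1)) ℂ)
    (hY : ∀ i < k, ∀ a b : Fin (2 * k + 1),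
      Y i a b =
        if ((a : ℕ) = i ∨ (a : ℕ) = 2 * k + 1 - 1 - i) ∧
            ((b : ℕ) = i ∨ (b : ℕ) = 2 * k + 1 - 1 - i) then
          X a b
        else (1 : Matrix (Fin (2 * k + 1)) (Fin (2 * k + 1)) ℂ) a b)
    (D : Matrix (Fin (2 * k + 1)) (Fin (2 * k + 1)) ℂ)
    (hD : ∀ a b : Fin (2 * k + 1),
      D a b =
        if (a : ℕ) = k ∧ (b : ℕ) = k then X a b
        else (1 : Matrix (Fin (2 * k + 1)) (Fin (2 * k + 1)) ℂ) a b) :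
    X = D * (((List.range k).reverse).map Y).prod := by
  have hY_eq : ∀ i < k, Y i = blockWithOne (mirrorPair (2 * k + 1) i) X := fun i hi => by
    ext a b
    simp only [hY i hi, blockWithOne, of_apply, mem_mirrorPair (by omega : i < 2 * k + 1)]
  have hD_eq : D = blockWithOne (mirrorPair (2 * k + 1) k) X := by
    ext a b
    simp only [hD, blockWithOne, of_apply, mem_mirrorPair (by omega : k < 2 * k + 1),
      show 2 * k + 1 - 1 - k = k by omega, or_self]
  rw [hX.prod_map_reverse_range (by omega) Y hY_eq, hD_eq,
    hX.blockWithOne_mirrorPair_mul_mirrorBand (by omega), mirrorBand_eq_univ (by omega),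
    blockWithOne_univ]

/-- For `n = 2k + 1`, a cross matrix factors as
`X = D ⬝ Y_{k-1} ⬝ Y_{k-2} ⬝ ⋯ ⬝ Y₀`, where `Yᵢ` agrees with the identity except at
the four positions `(i,i)`, `(i,n-1-i)`, `(n-1-i,i)`, `(n-1-i,n-1-i)`, where it
agrees with `X`, and `D` agrees with the identity except that `D k k = X k k`. -/
theorem crossMatrix_factorization_odd_rev (k : ℕ) (hk : 1 ≤ k)
    (X : Matrix (Fin (2 * k + 1)) (Fin (2 * k + 1)) ℂ) (hX : IsCrossMatrix X)
    (Y : ℕ → Matrix (Fin (2 * k + 1)) (Fin (2 * k + 1)) ℂ)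
    (hY : ∀ i < k, ∀ a b : Fin (2 * k + 1),
      Y i a b =
        if ((a : ℕ) = i ∨ (a : ℕ) = 2 * k + 1 - 1 - i) ∧
            ((b : ℕ) = i ∨ (b : ℕ) = 2 * k + 1 - 1 - i) then
          X a b
        else (1 : Matrix (Fin (2 * k + 1)) (Fin (2 * k + 1)) ℂ) a b)
    (D : Matrix (Fin (2 * k + 1)) (Fin (2 * k + 1)) ℂ)
    (hD : ∀ a b : Fin (2 * k + 1),
      D a b =
        if (a : ℕ) = k ∧ (b : ℕ) = k then X a b
        else (1 : Matrix (Fin (2 * k + 1)) (Fin (2 * k + 1)) ℂ) a b) :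
    X = D * (((List.range k).reverse).map Y).prod :=
  crossMatrix_factorization_odd_rev_general k X hX Y hY D hD
end

section
/- For every n×n complex cross matrix X there exists a permutation σ of Fin n such that the symmetrically permuted matrix M, defined by M i j = X (σ i) (σ j), is block diagonal with diagonal blocks of size at most 2: namely, M i j = 0 whenever ⌊i/2⌋ ≠ ⌊j/2⌋ (integer division on the 0-based indices). -/
/-!
Pair off each index `k < n` with its mirror image `n - 1 - k`. A cross matrix has its nonzero
entries only inside these pairs, so listing the indices as `0, n - 1, 1, n - 2, …` puts every pair
into one block `{2m, 2m + 1}` (when `n` is odd, the middle index is a pair with itself and sits alone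
in the last block).
-/

namespace Fin

def interleaveEnds (n : ℕ) (i : Fin n) : Fin n :=
  ⟨if (i : ℕ) % 2 = 0 then (i : ℕ) / 2 else n - 1 - (i : ℕ) / 2, by split_ifs <;> omega⟩

theorem val_interleaveEnds {n : ℕ} (i : Fin n) :
    (interleaveEnds n i : ℕ) = if (i : ℕ) % 2 = 0 then (i : ℕ) / 2 else n - 1 - (i : ℕ) / 2 :=
  rfl

theorem interleaveEnds_injective (n : ℕ) : Function.Injective (interleaveEnds n) := by
  intro i j h
  have h' := congrArg Fin.val h
  rw [val_interleaveEnds, val_interleaveEnds] at h'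
  ext
  split_ifs at h' <;> omega

theorem div_two_eq_of_interleaveEnds_mirror {n : ℕ} {i j : Fin n}
    (h : (interleaveEnds n i : ℕ) + interleaveEnds n j + 1 = n) : (i : ℕ) / 2 = j / 2 := by
  rw [val_interleaveEnds, val_interleaveEnds] at h
  split_ifs at h <;> omega

noncomputable def interleaveEndsPerm (n : ℕ) : Equiv.Perm (Fin n) :=
  Equiv.ofBijective _ (Finite.injective_iff_bijective.mp (interleaveEnds_injective n))

end Fin

/-- Any cross matrix is symmetrically permutable to a block diagonal matrix
with diagonal blocks of size at most `2`. -/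
theorem crossMatrix_perm_block_diagonal {n : ℕ}
    (X : Matrix (Fin n) (Fin n) ℂ) (hX : IsCrossMatrix X) :
    ∃ σ : Equiv.Perm (Fin n),
      ∀ i j : Fin n, (i : ℕ) / 2 ≠ (j : ℕ) / 2 → X (σ i) (σ j) = 0 := by
  refine ⟨Fin.interleaveEndsPerm n, fun i j hij => hX _ _ ?_ ?_⟩
  · intro h
    exact hij (congrArg (fun k : Fin n => (k : ℕ) / 2) (Fin.interleaveEnds_injective n h)).symm
  · exact fun h => hij (Fin.div_two_eq_of_interleaveEnds_mirror h)
end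

section
/- If X is an invertible n×n complex cross matrix, then its inverse X⁻¹ is also a cross matrix. -/
theorem Subalgebra.ringInverse_mem {K A : Type*} [Field K] [Ring A] [Algebra K A]
    [FiniteDimensional K A] (S : Subalgebra K A) {x : A} (hx : x ∈ S) : Ring.inverse x ∈ S := by
  by_cases hunit : IsUnit x
  · have : IsArtinianRing S := IsArtinianRing.of_finite K S
    have hreg : IsRightRegular (⟨x, hx⟩ : S) := fun _ _ e ↦
      Subtype.ext (hunit.isRegular.right (congrArg Subtype.val e))
    obtain ⟨u, hu⟩ := IsArtinianRing.isUnit_iff_isRightRegular.mpr hreg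
    have hx' : x = (Units.map S.val.toMonoidHom u : Aˣ) := by simp [hu]
    rw [hx', Ring.inverse_unit, ← map_inv]
    exact (↑u⁻¹ : S).2
  · rw [Ring.inverse_non_unit x hunit]
    exact S.zero_mem

namespace Matrix

variable {m : Type*} [Fintype m] [DecidableEq m] (R : Type*) [CommSemiring R]
  {σ : m → m} (hσ : Function.Involutive σ)

def crossSubalgebra : Subalgebra R (Matrix m m R) where
  carrier := {X | ∀ i j, j ≠ i → j ≠ σ i → X i j = 0}
  add_mem' hX hY i j hi hσi := by
    rw [add_apply, hX i j hi hσi, hY i j hi hσi, add_zero]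
  mul_mem' {X Y} hX hY i j hi hσi := by
    rw [mul_apply]
    refine Finset.sum_eq_zero fun k _ ↦ ?_
    by_cases hk : k = i ∨ k = σ i
    · have hYkj : Y k j = 0 := by
        rcases hk with rfl | rfl
        · exact hY _ j hi hσi
        · exact hY _ j hσi (by rwa [hσ])
      rw [hYkj, mul_zero]
    · push Not at hk
      rw [hX i k hk.1 hk.2, zero_mul]
  algebraMap_mem' c i j hi _ := by
    rw [algebraMap_matrix_apply, if_neg hi.symm]

variable {R hσ} in
theorem mem_crossSubalgebra {X : Matrix m m R} :
    X ∈ crossSubalgebra R hσ ↔ ∀ i j, j ≠ i → j ≠ σ i → X i j = 0 :=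
  Iff.rfl

end Matrix

theorem isCrossMatrix_iff_mem_crossSubalgebra {n : ℕ} (X : Matrix (Fin n) (Fin n) ℂ) :
    IsCrossMatrix X ↔ X ∈ Matrix.crossSubalgebra ℂ Fin.rev_involutive := by
  have hrev (i j : Fin n) : (i : ℕ) + j + 1 = n ↔ j = i.rev := by
    rw [Fin.ext_iff, Fin.val_rev]; omega
  simp only [IsCrossMatrix, Matrix.mem_crossSubalgebra, ne_eq, hrev]

theorem crossMatrix_inv_general {n : ℕ}
    (X : Matrix (Fin n) (Fin n) ℂ) (hX : IsCrossMatrix X) :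
    IsCrossMatrix X⁻¹ := by
  rw [isCrossMatrix_iff_mem_crossSubalgebra] at hX ⊢
  rw [Matrix.nonsing_inv_eq_ringInverse]
  exact Subalgebra.ringInverse_mem _ hX

/-- The inverse of an invertible cross matrix is again a cross matrix. -/
theorem crossMatrix_inv {n : ℕ}
    (X : Matrix (Fin n) (Fin n) ℂ) (hX : IsCrossMatrix X) (h : IsUnit X) :
    IsCrossMatrix X⁻¹ :=
  crossMatrix_inv_general X hX
end

section
/- Let n = 2k with k ≥ 1 and let X be an n×n complex cross matrix. Then det(X) = ∏_{i=0}^{k-1} ( X i i · X (n-1-i) (n-1-i) − X i (n-1-i) · X (n-1-i) i ). -/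
/-- Determinant formula for an even-order cross matrix (`n = 2k`): the
determinant is a product of `2 × 2` cross determinants.  Here for `i < k` the
index `n - 1 - i` is `(Fin.castLE _ i).rev`. -/
theorem crossMatrix_det_even (k : ℕ) (hk : 1 ≤ k)
    (X : Matrix (Fin (2 * k)) (Fin (2 * k)) ℂ) (hX : IsCrossMatrix X) :
    X.det =
      ∏ i : Fin k,
        (X (Fin.castLE (by omega) i) (Fin.castLE (by omega) i) *
            X (Fin.castLE (by omega) i).rev (Fin.castLE (by omega) i).rev -
          X (Fin.castLE (by omega) i) (Fin.castLE (by omega) i).rev *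
            X (Fin.castLE (by omega) i).rev (Fin.castLE (by omega) i)) := by
  set f : Fin 2 × Fin k → Fin (2 * k) := fun p =>
    if p.1 = 0 then ⟨p.2, by have := p.2.2; omega⟩ else ⟨2 * k - 1 - p.2, by have := p.2.2; omega⟩ with hf
  have hinj : Function.Injective f := by
    rintro ⟨a, i⟩ ⟨b, j⟩ h
    have hi := i.2; have hj := j.2
    fin_cases a <;> fin_cases b <;> simp only [hf] at h ⊢ <;> simp [Fin.ext_iff] at h ⊢ <;> omega
  have hbij : Function.Bijective f :=
    (Fintype.bijective_iff_injective_and_card f).mpr ⟨hinj, by simp⟩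
  set e : Fin 2 × Fin k ≃ Fin (2 * k) := Equiv.ofBijective f hbij with he
  have key : X.submatrix e e =
      Matrix.blockDiagonal (fun i : Fin k =>
        !![X (Fin.castLE (by omega) i) (Fin.castLE (by omega) i),
           X (Fin.castLE (by omega) i) (Fin.castLE (by omega) i).rev;
           X (Fin.castLE (by omega) i).rev (Fin.castLE (by omega) i),
           X (Fin.castLE (by omega) i).rev (Fin.castLE (by omega) i).rev]) := by
    ext ⟨a, i⟩ ⟨b, j⟩
    have hi := i.2; have hj := j.2
    have hcast : ∀ m : Fin k, (Fin.castLE (by omega : k ≤ 2 * k) m : Fin (2*k)) = f (0, m) := by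
      intro m; simp only [hf]; simp [Fin.ext_iff]
    have hrev : ∀ m : Fin k, (Fin.castLE (by omega : k ≤ 2 * k) m).rev = f (1, m) := by
      intro m; have := m.2; simp only [hf]; simp [Fin.rev, Fin.ext_iff]; omega
    have hee : ∀ p, e p = f p := fun p => rfl
    rcases eq_or_ne i j with rfl | hij
    · fin_cases a <;> fin_cases b <;>
        simp [Matrix.blockDiagonal_apply, Matrix.submatrix_apply, hee, ← hcast, ← hrev]
    · have hij' : (i : ℕ) ≠ (j : ℕ) := fun h => hij (Fin.ext h)
      fin_cases a <;> fin_cases b <;>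
        · simp only [Matrix.submatrix_apply, Matrix.blockDiagonal_apply, hee,
            if_neg hij, if_neg (hij ∘ Eq.symm)]
          apply hX
          · simp only [hf]; simp [Fin.ext_iff]; omega
          · simp [hf]; omega
  have := Matrix.det_submatrix_equiv_self e X
  rw [key] at this
  rw [← this, Matrix.det_blockDiagonal]
  congr 1
  ext i
  rw [Matrix.det_fin_two_of]
end

section
/- Let n = 2k+1 with k ≥ 0 and let X be an n×n complex cross matrix. Then det(X) = X k k · ∏_{i=0}^{k-1} ( X i i · X (n-1-i) (n-1-i) − X i (n-1-i) · X (n-1-i) i ). -/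
/-- Reindexing equivalence: `inl 0 ↦ 0`, `inl 1 ↦ 2k+2`, `inr j ↦ j+1`. -/
def crossReindex (k : ℕ) : Fin 2 ⊕ Fin (2 * k + 1) ≃ Fin (2 * (k + 1) + 1) where
  toFun := Sum.elim
    (fun i => if i = 0 then ⟨0, by omega⟩ else ⟨2 * k + 2, by omega⟩)
    (fun j => ⟨(j : ℕ) + 1, by omega⟩)
  invFun i :=
    if (i : ℕ) = 0 then Sum.inl 0
    else if h2 : (i : ℕ) = 2 * k + 2 then Sum.inl 1
    else Sum.inr ⟨(i : ℕ) - 1, by have := i.isLt; omega⟩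
  left_inv := by
    rintro (i | j)
    · fin_cases i <;> simp
    · have hj := j.isLt
      show (if (j : ℕ) + 1 = 0 then _ else if h2 : (j : ℕ) + 1 = 2 * k + 2 then _ else _) = _
      rw [if_neg (by omega), dif_neg (by omega)]
      simp
  right_inv := by
    intro i
    dsimp only
    by_cases h0 : (i : ℕ) = 0
    · rw [if_pos h0]; simp [Fin.ext_iff, h0.symm]
    · rw [if_neg h0]
      by_cases h2 : (i : ℕ) = 2 * k + 2
      · rw [dif_pos h2]; exact Fin.ext (show 2 * k + 2 = (i : ℕ) by omega)
      · rw [dif_neg h2]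
        simp only [Sum.elim_inr]
        exact Fin.ext (by simp; omega)

lemma crossReindex_inl0 (k : ℕ) : crossReindex k (Sum.inl 0) = ⟨0, by omega⟩ := rfl

lemma crossReindex_inl1 (k : ℕ) :
    crossReindex k (Sum.inl 1) = ⟨2 * k + 2, by omega⟩ := rfl

lemma crossReindex_inr (k : ℕ) (j : Fin (2 * k + 1)) :
    crossReindex k (Sum.inr j) = ⟨(j : ℕ) + 1, by omega⟩ := rfl

/-- The central block of an odd cross matrix, after deleting the outer frame. -/
def crossInner (k : ℕ) (X : Matrix (Fin (2 * (k + 1) + 1)) (Fin (2 * (k + 1) + 1)) ℂ) :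
    Matrix (Fin (2 * k + 1)) (Fin (2 * k + 1)) ℂ :=
  Matrix.of fun i j : Fin (2 * k + 1) =>
    X ⟨(i : ℕ) + 1, by omega⟩ ⟨(j : ℕ) + 1, by omega⟩

lemma crossInner_blocks (k : ℕ)
    (X : Matrix (Fin (2 * (k + 1) + 1)) (Fin (2 * (k + 1) + 1)) ℂ)
    (hX : IsCrossMatrix X) :
    X.submatrix (crossReindex k) (crossReindex k) =
      Matrix.fromBlocks
        !![X ⟨0, by omega⟩ ⟨0, by omega⟩, X ⟨0, by omega⟩ ⟨2 * k + 2, by omega⟩;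
           X ⟨2 * k + 2, by omega⟩ ⟨0, by omega⟩,
           X ⟨2 * k + 2, by omega⟩ ⟨2 * k + 2, by omega⟩]
        0 0 (crossInner k X) := by
  ext i j
  rcases i with i | i <;> rcases j with j | j
  · fin_cases i <;> fin_cases j <;> rfl
  · have hj := j.isLt
    fin_cases i <;>
    · simp only [Matrix.submatrix_apply, Matrix.fromBlocks_apply₁₂, Matrix.zero_apply]
      apply hX
      · intro h
        have := congrArg Fin.val h
        simp [crossReindex] at this
        try omega
      · simp [crossReindex]; try omega
  · have hi := i.isLt
    fin_cases j <;>
    · simp only [Matrix.submatrix_apply, Matrix.fromBlocks_apply₂₁, Matrix.zero_apply]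
      apply hX
      · intro h
        have := congrArg Fin.val h
        simp [crossReindex] at this
        try omega
      · simp [crossReindex]; try omega
  · rfl

lemma crossInner_isCross (k : ℕ)
    (X : Matrix (Fin (2 * (k + 1) + 1)) (Fin (2 * (k + 1) + 1)) ℂ)
    (hX : IsCrossMatrix X) : IsCrossMatrix (crossInner k X) := by
  intro i j hji hsum
  simp only [crossInner, Matrix.of_apply]
  apply hX
  · intro h
    have := congrArg Fin.val h
    simp at this
    exact hji (Fin.ext this)
  · simp; omega

lemma crossDet_step (k : ℕ)
    (X : Matrix (Fin (2 * (k + 1) + 1)) (Fin (2 * (k + 1) + 1)) ℂ)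
    (hX : IsCrossMatrix X) :
    X.det =
      (X ⟨0, by omega⟩ ⟨0, by omega⟩ * X ⟨2 * k + 2, by omega⟩ ⟨2 * k + 2, by omega⟩ -
        X ⟨0, by omega⟩ ⟨2 * k + 2, by omega⟩ * X ⟨2 * k + 2, by omega⟩ ⟨0, by omega⟩) *
      (crossInner k X).det := by
  rw [← Matrix.det_submatrix_equiv_self (crossReindex k) X, crossInner_blocks k X hX,
    Matrix.det_fromBlocks_zero₂₁, Matrix.det_fin_two]
  simp

/-- Determinant formula for an odd-order cross matrix (`n = 2k + 1`): the
determinant is the central entry times a product of `2 × 2` cross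
determinants.  Here for `i < k` the index `n - 1 - i` is `(Fin.castLE _ i).rev`. -/
theorem crossMatrix_det_odd (k : ℕ)
    (X : Matrix (Fin (2 * k + 1)) (Fin (2 * k + 1)) ℂ) (hX : IsCrossMatrix X) :
    X.det =
      X ⟨k, by omega⟩ ⟨k, by omega⟩ *
        ∏ i : Fin k,
          (X (Fin.castLE (by omega) i) (Fin.castLE (by omega) i) *
              X (Fin.castLE (by omega) i).rev (Fin.castLE (by omega) i).rev -
            X (Fin.castLE (by omega) i) (Fin.castLE (by omega) i).rev *
              X (Fin.castLE (by omega) i).rev (Fin.castLE (by omega) i)) := by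
  induction k with
  | zero =>
      simp [Matrix.det_fin_one]
  | succ k ih =>
      rw [crossDet_step k X hX, ih (crossInner k X) (crossInner_isCross k X hX)]
      rw [Fin.prod_univ_succ]
      have hc : crossInner k X ⟨k, by omega⟩ ⟨k, by omega⟩ =
          X ⟨k + 1, by omega⟩ ⟨k + 1, by omega⟩ := rfl
      rw [hc]
      have hterm0 :
          (X (Fin.castLE (by omega) (0 : Fin (k + 1))) (Fin.castLE (by omega) (0 : Fin (k + 1))) *
              X (Fin.castLE (by omega : k + 1 ≤ 2 * (k + 1) + 1) (0 : Fin (k + 1))).rev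
                (Fin.castLE (by omega) (0 : Fin (k + 1))).rev -
            X (Fin.castLE (by omega) (0 : Fin (k + 1)))
                (Fin.castLE (by omega : k + 1 ≤ 2 * (k + 1) + 1) (0 : Fin (k + 1))).rev *
              X (Fin.castLE (by omega : k + 1 ≤ 2 * (k + 1) + 1) (0 : Fin (k + 1))).rev
                (Fin.castLE (by omega) (0 : Fin (k + 1)))) =
          (X ⟨0, by omega⟩ ⟨0, by omega⟩ * X ⟨2 * k + 2, by omega⟩ ⟨2 * k + 2, by omega⟩ -
            X ⟨0, by omega⟩ ⟨2 * k + 2, by omega⟩ * X ⟨2 * k + 2, by omega⟩ ⟨0, by omega⟩) := by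
        congr 1 <;> congr 1 <;> congr 1 <;> exact Fin.ext (by simp [Fin.rev]; omega)
      have hprod : ∀ i : Fin k,
          (crossInner k X (Fin.castLE (by omega) i) (Fin.castLE (by omega) i) *
              crossInner k X (Fin.castLE (by omega : k ≤ 2 * k + 1) i).rev
                (Fin.castLE (by omega) i).rev -
            crossInner k X (Fin.castLE (by omega) i)
                (Fin.castLE (by omega : k ≤ 2 * k + 1) i).rev *
              crossInner k X (Fin.castLE (by omega : k ≤ 2 * k + 1) i).rev
                (Fin.castLE (by omega) i)) =
          (X (Fin.castLE (by omega) (Fin.succ i)) (Fin.castLE (by omega) (Fin.succ i)) *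
              X (Fin.castLE (by omega : k + 1 ≤ 2 * (k + 1) + 1) (Fin.succ i)).rev
                (Fin.castLE (by omega) (Fin.succ i)).rev -
            X (Fin.castLE (by omega) (Fin.succ i))
                (Fin.castLE (by omega : k + 1 ≤ 2 * (k + 1) + 1) (Fin.succ i)).rev *
              X (Fin.castLE (by omega : k + 1 ≤ 2 * (k + 1) + 1) (Fin.succ i)).rev
                (Fin.castLE (by omega) (Fin.succ i))) := by
        intro i
        have hi := i.isLt
        simp only [crossInner, Matrix.of_apply]
        congr 1 <;> congr 1 <;> congr 1 <;> exact Fin.ext (by simp [Fin.rev]; omega)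
      rw [Finset.prod_congr rfl (fun i _ => hprod i), hterm0]
      ring
end

section
/- Let X be an n×n complex cross matrix with n ≥ 2, and let i, j be 0-based indices with j ≠ i and (i + j + 1 : ℕ) ≠ n. Then the (j,i) minor of X vanishes: the determinant of the (n−1)×(n−1) submatrix of X obtained by deleting row j and column i is zero. -/
/-!
Let `s = {j, n - 1 - j}`. Columns of a cross matrix indexed by `s` vanish outside the rows
indexed by `s`. Deleting column `i ∉ s` and row `j ∈ s` keeps all `|s|` of these columns but
leaves them supported on only `|s| - 1` rows, so every term of the Leibniz expansion of the
minor vanishes by the pigeonhole principle.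
-/

namespace Matrix

variable {R : Type*} [CommRing R]

theorem det_eq_zero_of_cols_supported_card_lt {n : Type*} [Fintype n] [DecidableEq n]
    (A : Matrix n n R) (cols rows : Finset n) (hcard : rows.card < cols.card)
    (hA : ∀ c ∈ cols, ∀ r ∉ rows, A r c = 0) : A.det = 0 := by
  rw [det_apply']
  refine Finset.sum_eq_zero fun σ _ => ?_
  obtain ⟨c, hc, hσc⟩ : ∃ c ∈ cols, σ c ∉ rows := by
    by_contra! h
    exact hcard.not_ge (Finset.card_le_card_of_injOn σ h σ.injective.injOn)
  exact mul_eq_zero_of_right _ (Finset.prod_eq_zero (Finset.mem_univ c) (hA c hc _ hσc))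

theorem det_submatrix_succAbove_eq_zero_of_cols_supported {m : ℕ}
    (X : Matrix (Fin (m + 1)) (Fin (m + 1)) R)
    {i j : Fin (m + 1)} (s : Finset (Fin (m + 1))) (hi : i ∉ s) (hj : j ∈ s)
    (hX : ∀ c ∈ s, ∀ r ∉ s, X r c = 0) : (X.submatrix j.succAbove i.succAbove).det = 0 := by
  refine det_eq_zero_of_cols_supported_card_lt _
    (s.preimage i.succAbove Fin.succAbove_right_injective.injOn)
    (s.preimage j.succAbove Fin.succAbove_right_injective.injOn) ?_
    fun c hc r hr => hX _ (Finset.mem_preimage.mp hc) _ (mt Finset.mem_preimage.mpr hr)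
  simp only [Finset.card_preimage, Fin.range_succAbove, Set.mem_compl_singleton_iff,
    Finset.filter_ne', Finset.filter_true_of_mem fun x hx => ne_of_mem_of_not_mem hx hi]
  exact Finset.card_erase_lt_of_mem hj

end Matrix

theorem IsCrossMatrix.apply_eq_zero_s10 {n : ℕ} {X : Matrix (Fin n) (Fin n) ℂ}
    (hX : IsCrossMatrix X) {r c : Fin n}
    (hr : r ∉ ({c, c.rev} : Finset (Fin n))) : X r c = 0 := by
  rw [Finset.mem_insert, Finset.mem_singleton, not_or] at hr
  refine hX r c (Ne.symm hr.1) fun h => hr.2 (Fin.ext ?_)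
  rw [Fin.val_rev]
  omega

theorem crossMatrix_minor_eq_zero_general (m : ℕ)
    (X : Matrix (Fin (m + 1)) (Fin (m + 1)) ℂ) (hX : IsCrossMatrix X)
    (i j : Fin (m + 1)) (hij : j ≠ i) (hanti : (i : ℕ) + (j : ℕ) + 1 ≠ m + 1) :
    (X.submatrix j.succAbove i.succAbove).det = 0 := by
  have hi_rev : i ≠ j.rev := by
    rintro rfl
    rw [Fin.val_rev] at hanti
    omega
  have hpair : ∀ c ∈ ({j, j.rev} : Finset (Fin (m + 1))),
      {c, c.rev} = ({j, j.rev} : Finset _) := by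
    intro c hc
    obtain rfl | rfl := by simpa using hc
    · rfl
    · rw [Fin.rev_rev, Finset.pair_comm]
  refine X.det_submatrix_succAbove_eq_zero_of_cols_supported {j, j.rev}
    (by simp [hij.symm, hi_rev]) (by simp) fun c hc r hr => hX.apply_eq_zero_s10 ?_
  rwa [hpair c hc]

/-- For a cross matrix of order `n = m + 1 ≥ 2`, the `(j, i)` minor (the
determinant of the submatrix obtained by deleting row `j` and column `i`)
vanishes whenever `j ≠ i` and `i + j + 1 ≠ n`. -/
theorem crossMatrix_minor_eq_zero (m : ℕ) (hm : 1 ≤ m)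
    (X : Matrix (Fin (m + 1)) (Fin (m + 1)) ℂ) (hX : IsCrossMatrix X)
    (i j : Fin (m + 1)) (hij : j ≠ i) (hanti : (i : ℕ) + (j : ℕ) + 1 ≠ m + 1) :
    (X.submatrix j.succAbove i.succAbove).det = 0 :=
  crossMatrix_minor_eq_zero_general m X hX i j hij hanti
end

section
/- If X is an n×n complex cross matrix, then its adjugate matrix adj(X) is also a cross matrix. -/
/-!
Cross matrices are exactly the matrices commuting with a diagonal matrix `D` whose entries
coincide precisely on the pairs `{i, n - 1 - i}`. The adjugate is anti-multiplicative, so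
`adj X` commutes with `adj D`; and when `D` is invertible, `adj D = det D • D⁻¹` is again
diagonal with the same pattern of equal entries.
-/

open Matrix Finset

theorem Commute.matrix_adjugate {ι R : Type*} [Fintype ι] [DecidableEq ι] [CommRing R]
    {A B : Matrix ι ι R} (h : Commute A B) : Commute A.adjugate B.adjugate := by
  rw [Commute, SemiconjBy, ← adjugate_mul_distrib, ← adjugate_mul_distrib, h.eq]

theorem Matrix.commute_diagonal_iff {ι R : Type*} [Fintype ι] [DecidableEq ι] [CommRing R]
    [NoZeroDivisors R] {A : Matrix ι ι R} {d : ι → R} :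
    Commute A (diagonal d) ↔ ∀ i j, d i ≠ d j → A i j = 0 := by
  have entry : ∀ i j, (A * diagonal d) i j - (diagonal d * A) i j = A i j * (d j - d i) := by
    intro i j
    rw [mul_diagonal, diagonal_mul]
    ring
  refine ⟨fun h i j hij => ?_, fun h => ?_⟩
  · have := entry i j
    rw [h.eq, sub_self, eq_comm] at this
    exact (mul_eq_zero.1 this).resolve_right (sub_ne_zero.2 (Ne.symm hij))
  · ext i j
    rw [← sub_eq_zero, entry]
    by_cases hij : d i = d j
    · rw [hij, sub_self, mul_zero]
    · rw [h i j hij, zero_mul]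

theorem Finset.prod_erase_eq_prod_erase_iff {ι K : Type*} [DecidableEq ι]
    [CommMonoidWithZero K] [IsCancelMulZero K] [Nontrivial K] {s : Finset ι} {d : ι → K}
    (hd : ∀ k ∈ s, d k ≠ 0) {i j : ι} (hi : i ∈ s) (hj : j ∈ s) :
    ∏ k ∈ s.erase i, d k = ∏ k ∈ s.erase j, d k ↔ d i = d j := by
  have hpi := mul_prod_erase s d hi
  have hpj := mul_prod_erase s d hj
  constructor
  · intro h
    rw [h, ← hpj] at hpi
    exact mul_right_cancel₀ (prod_ne_zero_iff.2 fun k hk => hd k (mem_of_mem_erase hk)) hpi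
  · intro h
    rw [← h, ← hpi] at hpj
    exact (mul_left_cancel₀ (hd i hi) hpj).symm

theorem isCrossMatrix_iff_commute_diagonal {n : ℕ} {X : Matrix (Fin n) (Fin n) ℂ}
    {d : Fin n → ℂ} (hd : ∀ i j, d i = d j ↔ j = i ∨ (i : ℕ) + j + 1 = n) :
    IsCrossMatrix X ↔ Commute X (diagonal d) := by
  simp only [commute_diagonal_iff, IsCrossMatrix, Ne, hd, not_or]
  exact ⟨fun h i j hij => h i j hij.1 hij.2, fun h i j hji hsum => h i j ⟨hji, hsum⟩⟩

def crossWeight (n : ℕ) (i : Fin n) : ℂ := min (i : ℕ) (n - 1 - i) + 1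

theorem crossWeight_ne_zero {n : ℕ} (i : Fin n) : crossWeight n i ≠ 0 :=
  Nat.cast_add_one_ne_zero _

theorem crossWeight_eq_iff {n : ℕ} (i j : Fin n) :
    crossWeight n i = crossWeight n j ↔ j = i ∨ (i : ℕ) + j + 1 = n := by
  rw [crossWeight, crossWeight, add_left_inj, Nat.cast_inj, Fin.ext_iff]
  omega

/-- The adjugate of a cross matrix is again a cross matrix. -/
theorem crossMatrix_adjugate {n : ℕ}
    (X : Matrix (Fin n) (Fin n) ℂ) (hX : IsCrossMatrix X) :
    IsCrossMatrix X.adjugate := by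
  have hcomm := ((isCrossMatrix_iff_commute_diagonal crossWeight_eq_iff).1 hX).matrix_adjugate
  rw [adjugate_diagonal] at hcomm
  refine (isCrossMatrix_iff_commute_diagonal fun i j => ?_).2 hcomm
  rw [prod_erase_eq_prod_erase_iff (fun k _ => crossWeight_ne_zero k) (mem_univ i) (mem_univ j),
    crossWeight_eq_iff]
end

section
/- Let X be an n×n complex cross matrix such that X i i ≠ 0 for all 0-based indices i with 2i + 1 < n. Then there exist n×n matrices L and U such that X = L · U, L is lower triangular with all diagonal entries equal to 1, U is upper triangular, and both L and U are cross matrices. -/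
/-- A cross matrix whose leading diagonal entries (those `X i i` with
`2i + 1 < n`) are nonzero admits an LU factorization with unit lower
triangular `L` and upper triangular `U`, both cross matrices. -/
theorem crossMatrix_lu {n : ℕ}
    (X : Matrix (Fin n) (Fin n) ℂ) (hX : IsCrossMatrix X)
    (hdiag : ∀ i : Fin n, 2 * (i : ℕ) + 1 < n → X i i ≠ 0) :
    ∃ L U : Matrix (Fin n) (Fin n) ℂ,
      X = L * U ∧
      (∀ i j : Fin n, i < j → L i j = 0) ∧
      (∀ i : Fin n, L i i = 1) ∧
      (∀ i j : Fin n, j < i → U i j = 0) ∧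
      IsCrossMatrix L ∧ IsCrossMatrix U := by
  classical
  have hrev : ∀ i j : Fin n, j = Fin.rev i ↔ (i : ℕ) + (j : ℕ) + 1 = n := by
    intro i j
    constructor
    · rintro rfl
      have := i.isLt
      simp only [Fin.val_rev]
      omega
    · intro h
      apply Fin.ext
      simp only [Fin.val_rev]
      omega
  set L : Matrix (Fin n) (Fin n) ℂ := fun i j =>
    if j = i then 1
    else if j = Fin.rev i ∧ n < 2 * (i : ℕ) + 1 then X i j / X j j else 0 with hLdef
  set U : Matrix (Fin n) (Fin n) ℂ := fun i j =>
    if j = i then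
      (if n < 2 * (i : ℕ) + 1 then
        X i i - X i (Fin.rev i) * X (Fin.rev i) i / X (Fin.rev i) (Fin.rev i)
      else X i i)
    else if j = Fin.rev i ∧ 2 * (i : ℕ) + 1 < n then X i j else 0 with hUdef
  have hLa : ∀ a b : Fin n, L a b =
      if b = a then 1
      else if b = Fin.rev a ∧ n < 2 * (a : ℕ) + 1 then X a b / X b b else 0 :=
    fun a b => rfl
  have hUa : ∀ a b : Fin n, U a b =
      if b = a then
        (if n < 2 * (a : ℕ) + 1 then
          X a a - X a (Fin.rev a) * X (Fin.rev a) a / X (Fin.rev a) (Fin.rev a)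
        else X a a)
      else if b = Fin.rev a ∧ 2 * (a : ℕ) + 1 < n then X a b else 0 :=
    fun a b => rfl
  refine ⟨L, U, ?_, ?_, ?_, ?_, ?_, ?_⟩
  · ext i j
    rw [Matrix.mul_apply]
    by_cases hi : n < 2 * (i : ℕ) + 1
    · have hrval : (Fin.rev i : ℕ) = n - ((i : ℕ) + 1) := Fin.val_rev i
      have hilt := i.isLt
      set r := Fin.rev i with hrdef
      have hir : r ≠ i := by
        intro h
        have := (hrev i i).mp h.symm
        omega
      have hr2 : 2 * (r : ℕ) + 1 < n := by omega
      have hXrr : X r r ≠ 0 := hdiag r hr2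
      have hrr : Fin.rev r = i := Fin.rev_rev i
      have hsum : ∑ k, L i k * U k j = L i i * U i j + L i r * U r j := by
        apply Finset.sum_eq_add i r (fun h => hir h.symm)
        · intro k _ ⟨hk1, hk2⟩
          rw [hLa, if_neg hk1, if_neg (fun h => hk2 h.1), zero_mul]
        · intro h; exact absurd (Finset.mem_univ i) h
        · intro h; exact absurd (Finset.mem_univ r) h
      rw [hsum]
      have hLii : L i i = 1 := by rw [hLa, if_pos rfl]
      have hLir : L i r = X i r / X r r := by
        rw [hLa, if_neg hir, if_pos ⟨rfl, hi⟩]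
      rw [hLii, hLir, one_mul]
      by_cases hj : j = i
      · have hUij : U i j = X i i - X i r * X r i / X r r := by
          rw [hUa, if_pos hj, if_pos hi]
        have hUrj : U r j = X r i := by
          rw [hUa, if_neg (hj ▸ (fun h => hir h.symm) : ¬ j = r),
            if_pos ⟨hj.trans hrr.symm, hr2⟩, hj]
        rw [hUij, hUrj, hj]
        field_simp
        ring
      · by_cases hjr : j = r
        · have hUij : U i j = 0 := by
            rw [hUa, if_neg hj, if_neg]
            rintro ⟨-, h⟩; omega
          have hUrj : U r j = X r r := by
            rw [hUa, if_pos hjr, if_neg (by omega)]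
          rw [hUij, hUrj, zero_add, div_mul_cancel₀ _ hXrr, hjr]
        · have hUij : U i j = 0 := by
            rw [hUa, if_neg hj, if_neg]
            rintro ⟨h, -⟩; exact hjr h
          have hUrj : U r j = 0 := by
            rw [hUa, if_neg hjr, if_neg]
            rintro ⟨h, -⟩; rw [hrr] at h; exact hj h
          rw [hUij, hUrj, mul_zero, add_zero]
          apply hX i j hj
          intro h
          exact hjr ((hrev i j).mpr h)
    · have hsum : ∑ k, L i k * U k j = L i i * U i j := by
        apply Finset.sum_eq_single i
        · intro k _ hk
          rw [hLa, if_neg hk, if_neg (fun h => hi h.2), zero_mul]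
        · intro h; exact absurd (Finset.mem_univ i) h
      rw [hsum]
      have hLii : L i i = 1 := by rw [hLa, if_pos rfl]
      rw [hLii, one_mul]
      by_cases hj : j = i
      · rw [hUa, if_pos hj, if_neg hi, hj]
      · by_cases hjr : j = Fin.rev i
        · have h2i : 2 * (i : ℕ) + 1 < n := by
            have h1 := (hrev i j).mp hjr
            rcases lt_or_eq_of_le (not_lt.mp hi) with h | h
            · omega
            · exfalso
              apply hj
              apply Fin.ext
              omega
          rw [hUa, if_neg hj, if_pos ⟨hjr, h2i⟩]
        · rw [hUa, if_neg hj, if_neg (fun h => hjr h.1)]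
          apply hX i j hj
          intro h
          exact hjr ((hrev i j).mpr h)
  · intro i j hij
    rw [hLa, if_neg hij.ne', if_neg]
    rintro ⟨h, hn⟩
    have := (hrev i j).mp h
    have := hij
    have : (i : ℕ) < (j : ℕ) := hij
    omega
  · intro i; rw [hLa, if_pos rfl]
  · intro i j hij
    rw [hUa, if_neg hij.ne, if_neg]
    rintro ⟨h, hn⟩
    have := (hrev i j).mp h
    have : (j : ℕ) < (i : ℕ) := hij
    omega
  · intro i j hj hn
    rw [hLa, if_neg hj, if_neg]
    rintro ⟨h, -⟩
    exact hn ((hrev i j).mp h)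
  · intro i j hj hn
    rw [hUa, if_neg hj, if_neg]
    rintro ⟨h, -⟩
    exact hn ((hrev i j).mp h)
end

section
/- Let X be an n×n real symmetric positive definite cross matrix. Then there exists an upper triangular n×n real matrix R that is a cross matrix and satisfies X = Rᵀ · R. -/
/-- An `n × n` real matrix is a *cross matrix* if its nonzero entries lie
only on the main diagonal and the anti-diagonal (0-based indices). -/
def IsCrossMatrixR {n : ℕ} (X : Matrix (Fin n) (Fin n) ℝ) : Prop :=
  ∀ i j : Fin n, j ≠ i → (i : ℕ) + (j : ℕ) + 1 ≠ n → X i j = 0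

/-- The cross Cholesky factor. -/
noncomputable def crossR {n : ℕ} (X : Matrix (Fin n) (Fin n) ℝ) :
    Matrix (Fin n) (Fin n) ℝ := fun i j =>
  if (i : ℕ) = j then
    (if (i : ℕ) + (j : ℕ) + 1 ≤ n then Real.sqrt (X i i)
     else Real.sqrt (X i i - (X i.rev i) ^ 2 / X i.rev i.rev))
  else if (i : ℕ) < j ∧ (i : ℕ) + (j : ℕ) + 1 = n then X i j / Real.sqrt (X i i)
  else 0

lemma crossR_zero {n : ℕ} (X : Matrix (Fin n) (Fin n) ℝ) (i j : Fin n)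
    (h1 : (i : ℕ) ≠ j) (h2 : ¬ ((i : ℕ) < j ∧ (i : ℕ) + (j : ℕ) + 1 = n)) :
    crossR X i j = 0 := by
  simp only [crossR, if_neg h1, if_neg h2]

lemma crossR_diag_low {n : ℕ} (X : Matrix (Fin n) (Fin n) ℝ) (i : Fin n)
    (h : 2 * (i : ℕ) + 1 ≤ n) : crossR X i i = Real.sqrt (X i i) := by
  unfold crossR
  rw [if_pos rfl, if_pos (show (i : ℕ) + (i : ℕ) + 1 ≤ n by omega)]

lemma crossR_diag_high {n : ℕ} (X : Matrix (Fin n) (Fin n) ℝ) (i : Fin n)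
    (h : n < 2 * (i : ℕ) + 1) :
    crossR X i i = Real.sqrt (X i i - (X i.rev i) ^ 2 / X i.rev i.rev) := by
  unfold crossR
  rw [if_pos rfl, if_neg (show ¬ ((i : ℕ) + (i : ℕ) + 1 ≤ n) by omega)]

lemma crossR_anti {n : ℕ} (X : Matrix (Fin n) (Fin n) ℝ) (i j : Fin n)
    (h1 : (i : ℕ) < j) (h2 : (i : ℕ) + (j : ℕ) + 1 = n) :
    crossR X i j = X i j / Real.sqrt (X i i) := by
  unfold crossR
  rw [if_neg (show ¬ ((i : ℕ) = j) by omega), if_pos ⟨h1, h2⟩]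

/-- A real symmetric positive definite cross matrix has a Cholesky
factorization `X = Rᵀ * R` with an upper triangular cross factor `R`. -/
theorem crossMatrix_cholesky {n : ℕ}
    (X : Matrix (Fin n) (Fin n) ℝ) (hX : IsCrossMatrixR X)
    (hsymm : X.transpose = X)
    (hpos : ∀ x : Fin n → ℝ, x ≠ 0 → 0 < dotProduct x (X.mulVec x)) :
    ∃ R : Matrix (Fin n) (Fin n) ℝ,
      (∀ i j : Fin n, j < i → R i j = 0) ∧
      IsCrossMatrixR R ∧
      X = R.transpose * R := by
  have hs : ∀ i j : Fin n, X j i = X i j := by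
    intro i j
    conv_lhs => rw [← hsymm]
    rfl
  -- diagonal entries are positive
  have hdiag : ∀ i : Fin n, 0 < X i i := by
    intro i
    have h := hpos (Pi.single i 1) (by
      intro h
      have := congrFun h i
      simp at this)
    rw [Matrix.mulVec_single, single_dotProduct] at h
    simpa using h
  -- 2×2 minor positivity
  have hminor : ∀ i j : Fin n, i ≠ j → 0 < X i i * X j j - X i j ^ 2 := by
    intro i j hij
    set a := X i i with ha
    set b := X i j with hb
    set x : Fin n → ℝ := fun k => if k = i then b else if k = j then -a else 0 with hx
    have hxne : x ≠ 0 := by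
      intro h
      have := congrFun h j
      simp [hx, hij.symm] at this
      exact absurd this.symm (ne_of_lt (hdiag i))
    have h := hpos x hxne
    have hsum : ∀ v : Fin n → ℝ, dotProduct x v = b * v i - a * v j := by
      intro v
      unfold dotProduct
      rw [show (Finset.univ : Finset (Fin n)) = insert i (insert j (Finset.univ \ {i, j})) by
        ext k; by_cases hk1 : k = i <;> by_cases hk2 : k = j <;> simp [hk1, hk2]]
      rw [Finset.sum_insert (by simp [hij]), Finset.sum_insert (by simp)]
      have : ∑ k ∈ Finset.univ \ {i, j}, x k * v k = 0 := by
        apply Finset.sum_eq_zero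
        intro k hk
        simp only [Finset.mem_sdiff, Finset.mem_insert, Finset.mem_singleton] at hk
        push_neg at hk
        simp [hx, hk.2.1, hk.2.2]
      rw [this]
      simp [hx, hij.symm]
      ring
    have hmv : ∀ k : Fin n, X.mulVec x k = X k i * b - X k j * a := by
      intro k
      show dotProduct (X k) x = _
      rw [dotProduct_comm, hsum]
      ring
    rw [hsum, hmv, hmv, hs i j] at h
    have h2 : 0 < a * X j j - b ^ 2 := by
      have := hdiag i
      nlinarith
    nlinarith [hdiag j]
  set R := crossR X with hR
  -- lower triangular entries vanish
  have htri : ∀ i j : Fin n, j < i → R i j = 0 := by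
    intro i j hij
    have hij' : (j : ℕ) < i := hij
    exact crossR_zero X i j (by omega) (by omega)
  -- R is a cross matrix
  have hcross : IsCrossMatrixR R := by
    intro i j hji hanti
    have : (j : ℕ) ≠ i := fun h => hji (Fin.ext h)
    exact crossR_zero X i j (by omega) (by omega)
  refine ⟨R, htri, hcross, ?_⟩
  ext i j
  rw [Matrix.mul_apply]
  simp only [Matrix.transpose_apply]
  by_cases hji : (j : ℕ) = (i : ℕ)
  · -- diagonal case
    have hji' : j = i := Fin.ext hji
    subst hji'
    by_cases hlow : 2 * (j : ℕ) + 1 ≤ n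
    · -- lower half (or middle): single term k = j
      rw [Finset.sum_eq_single j]
      · rw [hR, crossR_diag_low X j hlow, Real.mul_self_sqrt (hdiag j).le]
      · intro k _ hkj
        have hk : (k : ℕ) ≠ j := fun h => hkj (Fin.ext h)
        have : R k j = 0 := by
          by_cases hc : (k : ℕ) < j ∧ (k : ℕ) + (j : ℕ) + 1 = n
          · omega
          · exact crossR_zero X k j hk hc
        rw [this, zero_mul]
      · simp
    · -- upper half: two terms k = j.rev and k = j
      have hjn : (j : ℕ) < n := j.isLt
      have hrev : (j.rev : ℕ) = n - (j : ℕ) - 1 := Fin.val_rev j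
      have hrevlt : j.rev < j := by
        show (j.rev : ℕ) < (j : ℕ); omega
      have hrevne : j.rev ≠ j := ne_of_lt hrevlt
      set i' := j.rev with hi'
      have hsub : ∀ k : Fin n, k ≠ i' → k ≠ j → R k j * R k j = 0 := by
        intro k hk1 hk2
        have hk2' : (k : ℕ) ≠ j := fun h => hk2 (Fin.ext h)
        have hk1' : (k : ℕ) ≠ (i' : ℕ) := fun h => hk1 (Fin.ext h)
        have : R k j = 0 := crossR_zero X k j hk2' (by omega)
        rw [this, zero_mul]
      rw [show (Finset.univ : Finset (Fin n)) =
          insert i' (insert j (Finset.univ \ {i', j})) by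
        ext k; by_cases hk1 : k = i' <;> by_cases hk2 : k = j <;> simp [hk1, hk2]]
      rw [Finset.sum_insert (by simp [hrevne]), Finset.sum_insert (by simp),
        Finset.sum_eq_zero (fun k hk => by
          simp only [Finset.mem_sdiff, Finset.mem_insert, Finset.mem_singleton] at hk
          push_neg at hk
          exact hsub k hk.2.1 hk.2.2), add_zero]
      have hd' : 0 < X i' i' := hdiag i'
      have hRi'j : R i' j = X i' j / Real.sqrt (X i' i') := by
        rw [hR]; exact crossR_anti X i' j (by omega) (by omega)
      have hRjj : R j j = Real.sqrt (X j j - (X i' j) ^ 2 / X i' i') := by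
        rw [hR, crossR_diag_high X j (by omega)]
      have hpos2 : 0 < X j j - X i' j ^ 2 / X i' i' := by
        have hm := hminor i' j hrevne
        rw [sub_pos, div_lt_iff₀ hd']
        nlinarith
      rw [hRi'j, hRjj, Real.mul_self_sqrt hpos2.le, div_mul_div_comm,
        Real.mul_self_sqrt hd'.le, ← sq]
      ring
  · -- off-diagonal
    by_cases hanti : (i : ℕ) + (j : ℕ) + 1 = n
    · rcases lt_or_gt_of_ne hji with hlt | hlt
      · -- j < i : single term k = j
        rw [Finset.sum_eq_single j]
        · rw [hR, crossR_anti X j i (by omega) (by omega),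
            crossR_diag_low X j (by omega), hs i j,
            div_mul_cancel₀ _ (Real.sqrt_ne_zero'.mpr (hdiag j))]
        · intro k _ hkj
          have hk : (k : ℕ) ≠ j := fun h => hkj (Fin.ext h)
          by_cases hki : (k : ℕ) = i
          · have : R k j = 0 := crossR_zero X k j hk (by omega)
            rw [this, mul_zero]
          · have : R k i = 0 := crossR_zero X k i hki (by omega)
            rw [this, zero_mul]
        · simp
      · -- i < j : single term k = i
        rw [Finset.sum_eq_single i]
        · rw [hR, crossR_anti X i j (by omega) (by omega),
            crossR_diag_low X i (by omega), mul_comm,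
            div_mul_cancel₀ _ (Real.sqrt_ne_zero'.mpr (hdiag i))]
        · intro k _ hki
          have hk : (k : ℕ) ≠ i := fun h => hki (Fin.ext h)
          by_cases hkj : (k : ℕ) = j
          · have : R k i = 0 := crossR_zero X k i hk (by omega)
            rw [this, zero_mul]
          · have : R k j = 0 := crossR_zero X k j hkj (by omega)
            rw [this, mul_zero]
        · simp
    · -- generic zero entry
      rw [hX i j (fun h => hji (congrArg Fin.val h)) hanti]
      symm
      apply Finset.sum_eq_zero
      intro k _
      by_cases hki : (k : ℕ) = i
      · have : R k j = 0 := crossR_zero X k j (by omega) (by omega)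
        rw [this, mul_zero]
      · by_cases hanti' : (k : ℕ) + (i : ℕ) + 1 = n
        · have : R k j = 0 := crossR_zero X k j (by omega) (by omega)
          rw [this, mul_zero]
        · have : R k i = 0 := crossR_zero X k i hki (by omega)
          rw [this, zero_mul]
end

section
/- Let X be an n×n complex cross matrix. Then there exist n×n complex matrices Q and R such that X = Q · R, Q is unitary (Qᴴ Q = I), R is upper triangular, and both Q and R are cross matrices. -/
open Matrix

namespace CrossQR

variable {n : ℕ}

lemma rev_iff (i j : Fin n) : (i : ℕ) + (j : ℕ) + 1 = n ↔ j = i.rev := by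
  rw [Fin.ext_iff, Fin.val_rev]
  have := i.isLt; have := j.isLt
  omega

lemma rev_swap {i j : Fin n} : j = i.rev ↔ i = j.rev := by
  constructor <;> (intro h; rw [h, Fin.rev_rev])

noncomputable def sv (X : Matrix (Fin n) (Fin n) ℂ) (i : Fin n) : ℝ :=
  Real.sqrt (‖X i i‖ ^ 2 + ‖X i.rev i‖ ^ 2)

lemma sv_sq (X : Matrix (Fin n) (Fin n) ℂ) (i : Fin n) :
    (sv X i) ^ 2 = ‖X i i‖ ^ 2 + ‖X i.rev i‖ ^ 2 :=
  Real.sq_sqrt (by positivity)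

lemma sv_eq_zero {X : Matrix (Fin n) (Fin n) ℂ} {i : Fin n} (h : sv X i = 0) :
    X i i = 0 ∧ X i.rev i = 0 := by
  have h2 := sv_sq X i
  rw [h] at h2
  have ha : ‖X i i‖ = 0 := by
    nlinarith [norm_nonneg (X i i), norm_nonneg (X i.rev i)]
  have hc : ‖X i.rev i‖ = 0 := by
    nlinarith [norm_nonneg (X i i), norm_nonneg (X i.rev i)]
  exact ⟨by simpa using ha, by simpa using hc⟩

noncomputable def Qm (X : Matrix (Fin n) (Fin n) ℂ) : Matrix (Fin n) (Fin n) ℂ :=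
  fun i j =>
    if j = i then
      (if i < i.rev then (if sv X i = 0 then 1 else X i i / (sv X i : ℂ))
       else if i.rev < i then
         (if sv X i.rev = 0 then 1 else (starRingEnd ℂ) (X i.rev i.rev) / (sv X i.rev : ℂ))
       else (if X i i = 0 then 1 else X i i / (‖X i i‖ : ℂ)))
    else if j = i.rev then
      (if i < j then (if sv X i = 0 then 0 else - (starRingEnd ℂ) (X j i) / (sv X i : ℂ))
       else (if sv X j = 0 then 0 else X i j / (sv X j : ℂ)))
    else 0

variable (X : Matrix (Fin n) (Fin n) ℂ)

lemma Q_off {i j : Fin n} (h1 : j ≠ i) (h2 : j ≠ i.rev) : Qm X i j = 0 := by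
  simp [Qm, h1, h2]

lemma Q_mid {i : Fin n} (h : i = i.rev) :
    Qm X i i = if X i i = 0 then 1 else X i i / (‖X i i‖ : ℂ) := by
  simp [Qm, ← h]

lemma Q_aa {i j : Fin n} (hij : i < j) (hj : j = i.rev) :
    Qm X i i = if sv X i = 0 then 1 else X i i / (sv X i : ℂ) := by
  have : i < i.rev := hj ▸ hij
  simp [Qm, this]

lemma Q_ab {i j : Fin n} (hij : i < j) (hj : j = i.rev) :
    Qm X i j = if sv X i = 0 then 0 else - (starRingEnd ℂ) (X j i) / (sv X i : ℂ) := by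
  subst hj
  simp [Qm, hij.ne', hij]

lemma Q_ba {i j : Fin n} (hij : i < j) (hj : j = i.rev) :
    Qm X j i = if sv X i = 0 then 0 else X j i / (sv X i : ℂ) := by
  have hrev : i = j.rev := rev_swap.mp hj
  simp [Qm, hij.ne, ← hrev, not_lt.mpr hij.le]

lemma Q_bb {i j : Fin n} (hij : i < j) (hj : j = i.rev) :
    Qm X j j = if sv X i = 0 then 1 else (starRingEnd ℂ) (X i i) / (sv X i : ℂ) := by
  have hrev : j.rev = i := (rev_swap.mp hj).symm
  simp [Qm, hrev, lt_asymm hij, hij]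

lemma sum_support_pair (f : Fin n → ℂ) (p : Fin n) (hp : p ≠ p.rev)
    (hf : ∀ k, k ≠ p → k ≠ p.rev → f k = 0) : ∑ k, f k = f p + f p.rev := by
  rw [← Finset.sum_pair hp]
  refine (Finset.sum_subset (Finset.subset_univ _) ?_).symm
  intro k _ hk
  simp only [Finset.mem_insert, Finset.mem_singleton, not_or] at hk
  exact hf k hk.1 hk.2

lemma sum_support_single (f : Fin n → ℂ) (p : Fin n)
    (hf : ∀ k, k ≠ p → f k = 0) : ∑ k, f k = f p :=
  Finset.sum_eq_single_of_mem p (Finset.mem_univ p) (fun k _ hk => hf k hk)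

lemma conj_mul_self_abs (z : ℂ) :
    (starRingEnd ℂ) z * z = ((‖z‖ : ℝ) : ℂ) ^ 2 := by
  rw [mul_comm, Complex.mul_conj, Complex.normSq_eq_norm_sq]
  push_cast
  ring

end CrossQR

open CrossQR in
/-- A cross matrix admits a QR factorization `X = Q * R` with unitary `Q` and
upper triangular `R`, both cross matrices. -/
theorem crossMatrix_qr {n : ℕ}
    (X : Matrix (Fin n) (Fin n) ℂ) (hX : IsCrossMatrix X) :
    ∃ Q R : Matrix (Fin n) (Fin n) ℂ,
      X = Q * R ∧
      Qᴴ * Q = 1 ∧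
      (∀ i j : Fin n, j < i → R i j = 0) ∧
      IsCrossMatrix Q ∧ IsCrossMatrix R := by
  have hX' : ∀ i j : Fin n, j ≠ i → j ≠ i.rev → X i j = 0 := by
    intro i j h1 h2
    exact hX i j h1 (fun h => h2 ((rev_iff i j).mp h))
  have hQcol : ∀ k p : Fin n, k ≠ p → k ≠ p.rev → Qm X k p = 0 := by
    intro k p h1 h2
    exact Q_off X (fun h => h1 h.symm) (fun h => h2 (rev_swap.mp h))
  have hunit : (Qm X)ᴴ * Qm X = 1 := by
    ext p q
    rw [Matrix.mul_apply]
    simp only [Matrix.conjTranspose_apply, Complex.star_def, Matrix.one_apply]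
    rcases eq_or_ne p q with rfl | hpq
    · rw [if_pos rfl]
      rcases lt_trichotomy p p.rev with h | h | h
      · -- p < p.rev
        rw [sum_support_pair _ p h.ne (fun k h1 h2 => by rw [hQcol k p h1 h2]; simp)]
        rw [Q_aa X h rfl, Q_ba X h rfl]
        by_cases hs : sv X p = 0
        · simp [hs]
        · simp only [if_neg hs]
          have hs' : (sv X p : ℂ) ≠ 0 := by exact_mod_cast hs
          simp only [map_div₀, Complex.conj_ofReal]
          have e1 := conj_mul_self_abs (X p p)
          have e2 := conj_mul_self_abs (X p.rev p)
          have e3 : ((sv X p : ℝ) : ℂ) ^ 2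
              = ((‖X p p‖ : ℝ) : ℂ) ^ 2 + ((‖X p.rev p‖ : ℝ) : ℂ) ^ 2 := by
            exact_mod_cast sv_sq X p
          field_simp
          linear_combination e1 + e2 - e3
      · -- center
        rw [sum_support_single _ p (fun k h1 => by
          rw [hQcol k p h1 (h ▸ h1)]; simp)]
        rw [Q_mid X h]
        by_cases hz : X p p = 0
        · simp [hz]
        · simp only [if_neg hz]
          have habs : (‖X p p‖ : ℂ) ≠ 0 := by simpa using hz
          simp only [map_div₀, Complex.conj_ofReal]
          have e1 := conj_mul_self_abs (X p p)
          field_simp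
          linear_combination e1
      · -- p.rev < p
        rw [sum_support_pair _ p (fun he => absurd he.symm h.ne) (fun k h1 h2 => by
          rw [hQcol k p h1 h2]; simp)]
        have hj : p = p.rev.rev := (Fin.rev_rev p).symm
        rw [Q_bb X h hj, Q_ab X h hj]
        by_cases hs : sv X p.rev = 0
        · simp [hs]
        · simp only [if_neg hs]
          have hs' : (sv X p.rev : ℂ) ≠ 0 := by exact_mod_cast hs
          simp only [map_div₀, map_neg, Complex.conj_ofReal, Complex.conj_conj]
          have e1 := conj_mul_self_abs (X p.rev p.rev)
          have e2 := conj_mul_self_abs (X p p.rev)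
          have e3 : ((sv X p.rev : ℝ) : ℂ) ^ 2
              = ((‖X p.rev p.rev‖ : ℝ) : ℂ) ^ 2
                + ((‖X p p.rev‖ : ℝ) : ℂ) ^ 2 := by
            have := sv_sq X p.rev
            rw [Fin.rev_rev] at this
            exact_mod_cast this
          field_simp
          linear_combination e1 + e2 - e3
    · rw [if_neg hpq]
      by_cases hq : q = p.rev
      · subst hq
        have hne : p ≠ p.rev := hpq
        rcases lt_or_gt_of_ne hne with h | h
        · rw [sum_support_pair _ p hne (fun k h1 h2 => by rw [hQcol k p h1 h2]; simp)]
          rw [Q_aa X h rfl, Q_ab X h rfl, Q_ba X h rfl, Q_bb X h rfl]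
          by_cases hs : sv X p = 0
          · simp [hs]
          · simp only [if_neg hs]
            have hs' : (sv X p : ℂ) ≠ 0 := by exact_mod_cast hs
            simp only [map_div₀, map_neg, Complex.conj_ofReal, Complex.conj_conj]
            field_simp
            ring
        · have hj : p = p.rev.rev := (Fin.rev_rev p).symm
          rw [sum_support_pair _ p hne (fun k h1 h2 => by rw [hQcol k p h1 h2]; simp)]
          rw [Q_bb X h hj, Q_ba X h hj, Q_ab X h hj, Q_aa X h hj]
          by_cases hs : sv X p.rev = 0
          · simp [hs]
          · simp only [if_neg hs]
            have hs' : (sv X p.rev : ℂ) ≠ 0 := by exact_mod_cast hs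
            simp only [map_div₀, map_neg, Complex.conj_ofReal, Complex.conj_conj]
            field_simp
            ring
      · apply Finset.sum_eq_zero
        intro k _
        by_cases hk1 : k = p
        · subst hk1
          rw [Q_off X (fun h => hpq h.symm) hq, mul_zero]
        · by_cases hk2 : k = p.rev
          · subst hk2
            rw [hQcol p.rev q (fun h => hq h.symm) (fun h => hpq (Fin.rev_inj.mp h)), mul_zero]
          · rw [hQcol k p hk1 hk2, map_zero, zero_mul]
  refine ⟨Qm X, (Qm X)ᴴ * X, ?_, hunit, ?_, ?_, ?_⟩
  · have h1 : Qm X * (Qm X)ᴴ = 1 := mul_eq_one_comm.mp hunit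
    rw [← Matrix.mul_assoc, h1, Matrix.one_mul]
  · -- upper triangular
    intro i j hji
    rw [Matrix.mul_apply]
    by_cases hc : i = j.rev
    · subst hc
      have hlt : j < j.rev := hji
      have hne : j ≠ j.rev := hlt.ne
      rw [sum_support_pair _ j hne (fun k h1 h2 => by
        rw [hX' k j (fun h => h1 h.symm) (fun h => h2 (rev_swap.mp h)), mul_zero])]
      simp only [Matrix.conjTranspose_apply, Complex.star_def]
      rw [Q_ab X hlt rfl, Q_bb X hlt rfl]
      by_cases hs : sv X j = 0
      · obtain ⟨ha, hcc⟩ := sv_eq_zero hs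
        simp [hs, ha, hcc]
      · simp only [if_neg hs]
        have hs' : (sv X j : ℂ) ≠ 0 := by exact_mod_cast hs
        simp only [map_div₀, map_neg, Complex.conj_ofReal, Complex.conj_conj]
        field_simp
        ring
    · apply Finset.sum_eq_zero
      intro k _
      by_cases hk1 : k = i
      · subst hk1
        rw [hX' k j hji.ne (fun h => hc (rev_swap.mp h)), mul_zero]
      · by_cases hk2 : k = i.rev
        · subst hk2
          rw [hX' i.rev j (fun h => hc (rev_swap.mp h))
            (by rw [Fin.rev_rev]; exact hji.ne), mul_zero]
        · rw [Matrix.conjTranspose_apply, hQcol k i hk1 hk2, star_zero, zero_mul]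
  · -- Q cross
    intro i j h1 h2
    exact Q_off X h1 (fun h => h2 ((rev_iff i j).mpr h))
  · -- R cross
    intro i j h1 h2
    have h2' : j ≠ i.rev := fun h => h2 ((rev_iff i j).mpr h)
    rw [Matrix.mul_apply]
    apply Finset.sum_eq_zero
    intro k _
    by_cases hk1 : k = i
    · subst hk1
      rw [hX' k j h1 h2', mul_zero]
    · by_cases hk2 : k = i.rev
      · subst hk2
        rw [hX' i.rev j h2' (by rw [Fin.rev_rev]; exact h1), mul_zero]
      · rw [Matrix.conjTranspose_apply, hQcol k i hk1 hk2, star_zero, zero_mul]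
end

section
/- Let X be an n×n complex cross matrix that is diagonalizable, i.e. there exist an invertible matrix W and a diagonal matrix D₀ with X = W D₀ W⁻¹. Then there exist an invertible n×n matrix V that is a cross matrix and a diagonal matrix D such that X = V D V⁻¹. -/
open Polynomial Matrix

section CrossAux

variable {n : ℕ}

/-- The cross condition, reformulated via `Fin.rev`. -/
def CrossFun (M : Matrix (Fin n) (Fin n) ℂ) : Prop :=
  ∀ k l : Fin n, l ≠ k → l ≠ k.rev → M k l = 0

lemma crossAux_mul_apply {M N : Matrix (Fin n) (Fin n) ℂ} {k : Fin n} (hk : k ≠ k.rev)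
    (hM : ∀ l, l ≠ k → l ≠ k.rev → M k l = 0) (l : Fin n) :
    (M * N) k l = M k k * N k l + M k k.rev * N k.rev l := by
  rw [Matrix.mul_apply,
    ← Finset.sum_subset (Finset.subset_univ ({k, k.rev} : Finset (Fin n)))
      (fun m _ hm => by
        simp only [Finset.mem_insert, Finset.mem_singleton, not_or] at hm
        rw [hM m hm.1 hm.2, zero_mul]),
    Finset.sum_insert (by simpa using hk), Finset.sum_singleton]

lemma crossAux_mul_apply_mid {M N : Matrix (Fin n) (Fin n) ℂ} {k : Fin n} (hk : k = k.rev)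
    (hM : ∀ l, l ≠ k → l ≠ k.rev → M k l = 0) (l : Fin n) :
    (M * N) k l = M k k * N k l := by
  rw [Matrix.mul_apply,
    ← Finset.sum_subset (Finset.subset_univ ({k} : Finset (Fin n)))
      (fun m _ hm => by
        simp only [Finset.mem_singleton] at hm
        rw [hM m hm (by rw [← hk]; exact hm), zero_mul]),
    Finset.sum_singleton]

lemma crossAux_mul {M N : Matrix (Fin n) (Fin n) ℂ} (hM : CrossFun M) (hN : CrossFun N) :
    CrossFun (M * N) := by
  intro k l h1 h2
  by_cases hk : k = k.rev
  · rw [crossAux_mul_apply_mid hk (hM k), hN k l h1 h2, mul_zero]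
  · rw [crossAux_mul_apply hk (hM k), hN k l h1 h2,
      hN k.rev l h2 (by rw [Fin.rev_rev]; exact h1), mul_zero, mul_zero, add_zero]

lemma crossAux_one : CrossFun (1 : Matrix (Fin n) (Fin n) ℂ) := by
  intro k l h1 _
  exact Matrix.one_apply_ne' h1

lemma crossAux_pow {M : Matrix (Fin n) (Fin n) ℂ} (hM : CrossFun M) (m : ℕ) :
    CrossFun (M ^ m) := by
  induction m with
  | zero => simpa [pow_zero] using crossAux_one
  | succ m ih => rw [pow_succ]; exact crossAux_mul ih hM

lemma crossAux_compress_pow {M : Matrix (Fin n) (Fin n) ℂ} (hM : CrossFun M) {i : Fin n}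
    (hi : i ≠ i.rev) (m : ℕ) :
    !![M i i, M i i.rev; M i.rev i, M i.rev i.rev] ^ m
      = !![(M ^ m) i i, (M ^ m) i i.rev; (M ^ m) i.rev i, (M ^ m) i.rev i.rev] := by
  have hirr : i.rev.rev = i := Fin.rev_rev i
  have hi2 : i.rev ≠ i := fun h => hi h.symm
  have hi' : i.rev ≠ i.rev.rev := by rw [hirr]; exact hi2
  induction m with
  | zero =>
    ext a b
    fin_cases a <;> fin_cases b <;>
      simp [pow_zero, Matrix.one_apply, hi, hi2]
  | succ m ih =>
    rw [pow_succ, pow_succ, ih]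
    have h1 := crossAux_mul_apply (N := M) hi (fun l => crossAux_pow hM m i l)
    have h2 := crossAux_mul_apply (N := M) hi' (fun l => crossAux_pow hM m i.rev l)
    ext a b
    fin_cases a <;> fin_cases b <;>
      simp [Matrix.mul_apply, Fin.sum_univ_two, h1, h2, hirr] <;> ring

lemma crossAux_compress_aeval {M : Matrix (Fin n) (Fin n) ℂ} (hM : CrossFun M) {i : Fin n}
    (hi : i ≠ i.rev) {p : ℂ[X]} (hp : aeval M p = 0) :
    aeval !![M i i, M i i.rev; M i.rev i, M i.rev i.rev] p = 0 := by
  have h0 := hp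
  rw [aeval_eq_sum_range] at h0
  have hz : ∀ x y : Fin n,
      (∑ m ∈ Finset.range (p.natDegree + 1), p.coeff m * (M ^ m) x y) = 0 := by
    intro x y
    have h1 := congrFun (congrFun h0 x) y
    rw [Matrix.sum_apply] at h1
    simpa [Matrix.smul_apply, smul_eq_mul] using h1
  rw [aeval_eq_sum_range]
  ext a b
  rw [Matrix.sum_apply]
  fin_cases a <;> fin_cases b <;>
    simp only [crossAux_compress_pow hM hi, Matrix.smul_apply, smul_eq_mul,
      Matrix.cons_val', Matrix.cons_val_zero, Matrix.cons_val_one, Matrix.head_cons,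
      Matrix.head_fin_const, Matrix.empty_val', Matrix.cons_val_fin_one, Matrix.of_apply,
      Matrix.zero_apply] <;>
    simp [hz]

lemma crossAux_aeval_conj (w : (Matrix (Fin n) (Fin n) ℂ)ˣ) (A : Matrix (Fin n) (Fin n) ℂ)
    (p : ℂ[X]) :
    aeval ((w : Matrix (Fin n) (Fin n) ℂ) * A * (↑w⁻¹ : Matrix (Fin n) (Fin n) ℂ)) p
      = (w : Matrix (Fin n) (Fin n) ℂ) * aeval A p * (↑w⁻¹ : Matrix (Fin n) (Fin n) ℂ) := by
  rw [aeval_eq_sum_range, aeval_eq_sum_range, Finset.mul_sum, Finset.sum_mul]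
  exact Finset.sum_congr rfl fun i _ => by
    rw [Units.conj_pow, mul_smul_comm, smul_mul_assoc]

lemma crossAux_aeval_diagonal (g : Fin n → ℂ) (p : ℂ[X]) :
    aeval (Matrix.diagonal g) p = Matrix.diagonal fun i => p.eval (g i) := by
  have h : Matrix.diagonal g = Matrix.diagonalAlgHom (n := Fin n) ℂ g := rfl
  have h2 : (aeval g p) = fun i => p.eval (g i) := funext fun i => by
    rw [Polynomial.aeval_fn_apply, Polynomial.coe_aeval_eq_eval]
  rw [h, aeval_algHom_apply, Matrix.diagonalAlgHom_apply, h2]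

lemma crossAux_blockEq {x y z w : ℂ} {P : Matrix (Fin 2) (Fin 2) ℂ} {e₀ e₁ : ℂ}
    (h : !![x,y;z,w] * P = P * Matrix.diagonal ![e₀, e₁]) :
    (x * P 0 0 + y * P 1 0 = P 0 0 * e₀) ∧ (x * P 0 1 + y * P 1 1 = P 0 1 * e₁) ∧
    (z * P 0 0 + w * P 1 0 = P 1 0 * e₀) ∧ (z * P 0 1 + w * P 1 1 = P 1 1 * e₁) := by
  refine ⟨?_, ?_, ?_, ?_⟩
  · have := congrFun (congrFun h 0) 0
    simpa [Matrix.mul_apply, Fin.sum_univ_two, Matrix.mul_diagonal] using this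
  · have := congrFun (congrFun h 0) 1
    simpa [Matrix.mul_apply, Fin.sum_univ_two, Matrix.mul_diagonal] using this
  · have := congrFun (congrFun h 1) 0
    simpa [Matrix.mul_apply, Fin.sum_univ_two, Matrix.mul_diagonal] using this
  · have := congrFun (congrFun h 1) 1
    simpa [Matrix.mul_apply, Fin.sum_univ_two, Matrix.mul_diagonal] using this

lemma crossAux_oneEq {P Q : Matrix (Fin 2) (Fin 2) ℂ} (h : P * Q = 1) :
    (P 0 0 * Q 0 0 + P 0 1 * Q 1 0 = 1) ∧ (P 0 0 * Q 0 1 + P 0 1 * Q 1 1 = 0) ∧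
    (P 1 0 * Q 0 0 + P 1 1 * Q 1 0 = 0) ∧ (P 1 0 * Q 0 1 + P 1 1 * Q 1 1 = 1) := by
  refine ⟨?_, ?_, ?_, ?_⟩
  · have := congrFun (congrFun h 0) 0
    simpa [Matrix.mul_apply, Fin.sum_univ_two, Matrix.one_apply] using this
  · have := congrFun (congrFun h 0) 1
    simpa [Matrix.mul_apply, Fin.sum_univ_two, Matrix.one_apply] using this
  · have := congrFun (congrFun h 1) 0
    simpa [Matrix.mul_apply, Fin.sum_univ_two, Matrix.one_apply] using this
  · have := congrFun (congrFun h 1) 1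
    simpa [Matrix.mul_apply, Fin.sum_univ_two, Matrix.one_apply] using this

lemma crossAux_fin2 (a b c d : ℂ) (p : ℂ[X]) (hsq : Squarefree p)
    (hp : aeval !![a,b;c,d] p = 0) :
    ∃ (P : Matrix (Fin 2) (Fin 2) ℂ) (e₀ e₁ : ℂ), IsUnit P ∧
      !![a,b;c,d] * P = P * Matrix.diagonal ![e₀, e₁] := by
  by_cases hbc : b = 0 ∧ c = 0
  · obtain ⟨hb, hc⟩ := hbc
    refine ⟨1, a, d, isUnit_one, ?_⟩
    subst hb hc
    ext i j
    fin_cases i <;> fin_cases j <;>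
      simp [Matrix.mul_apply, Fin.sum_univ_two, Matrix.one_apply, Matrix.diagonal]
  obtain ⟨s, hs⟩ : ∃ s : ℂ, s ^ 2 = (a - d) ^ 2 + 4 * (b * c) :=
    IsAlgClosed.exists_pow_nat_eq _ (by norm_num)
  by_cases hs0 : s = 0
  · exfalso
    rw [hs0] at hs
    have hdisc : (a - d) ^ 2 + 4 * (b * c) = 0 := by rw [← hs]; ring
    have hB2 : (!![a,b;c,d] - ((a + d)/2) • 1) * (!![a,b;c,d] - ((a + d)/2) • 1) = 0 := by
      ext i j
      fin_cases i <;> fin_cases j <;>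
        simp [Matrix.mul_apply, Fin.sum_univ_two, Matrix.one_apply, Matrix.sub_apply] <;>
        ring_nf <;>
        (first
          | rfl
          | ring1
          | linear_combination hdisc / 4
          | linear_combination -hdisc / 4)
    set q : ℂ[X] := (X - C ((a + d)/2)) ^ 2 with hqdef
    have hq : q.Monic := (monic_X_sub_C _).pow 2
    have haq : aeval !![a,b;c,d] q = 0 := by
      have h1 : aeval !![a,b;c,d] (X - C ((a + d)/2)) = !![a,b;c,d] - ((a + d)/2) • 1 := by
        simp [Algebra.algebraMap_eq_smul_one]
      rw [hqdef, map_pow, h1, sq, hB2]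
    have key : aeval !![a,b;c,d] (p %ₘ q) = 0 := by
      have h2 := congrArg (aeval !![a,b;c,d]) (modByMonic_add_div p q)
      rw [map_add, _root_.map_mul, haq, zero_mul, add_zero] at h2
      rw [h2, hp]
    have hdeg : (p %ₘ q).degree ≤ 1 := by
      have h3 := degree_modByMonic_lt p hq
      rw [hqdef, degree_pow, degree_X_sub_C] at h3
      exact Order.le_of_lt_succ (by exact_mod_cast h3)
    have hr := eq_X_add_C_of_degree_le_one hdeg
    rw [hr] at key
    simp only [map_add, _root_.map_mul, aeval_X, aeval_C] at key
    have e01 : (p %ₘ q).coeff 1 * b = 0 := by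
      have := congrFun (congrFun key 0) 1
      simpa [Matrix.add_apply, Matrix.mul_apply, Fin.sum_univ_two,
        Matrix.algebraMap_matrix_apply] using this
    have e10 : (p %ₘ q).coeff 1 * c = 0 := by
      have := congrFun (congrFun key 1) 0
      simpa [Matrix.add_apply, Matrix.mul_apply, Fin.sum_univ_two,
        Matrix.algebraMap_matrix_apply] using this
    have hc1 : (p %ₘ q).coeff 1 = 0 := by
      rcases not_and_or.mp hbc with hb | hc
      · exact (mul_eq_zero.mp e01).resolve_right hb
      · exact (mul_eq_zero.mp e10).resolve_right hc
    have e00 : (p %ₘ q).coeff 1 * a + (p %ₘ q).coeff 0 = 0 := by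
      have := congrFun (congrFun key 0) 0
      simpa [Matrix.add_apply, Matrix.mul_apply, Fin.sum_univ_two,
        Matrix.algebraMap_matrix_apply] using this
    have hc0 : (p %ₘ q).coeff 0 = 0 := by rw [hc1, zero_mul, zero_add] at e00; exact e00
    have hmod : p %ₘ q = 0 := by rw [hr, hc1, hc0]; simp
    have hdvd : (X - C ((a + d)/2)) * (X - C ((a + d)/2)) ∣ p := by
      refine ⟨p /ₘ q, ?_⟩
      conv_lhs => rw [← modByMonic_add_div p q]
      rw [hmod, zero_add, hqdef, sq]
    exact Polynomial.not_isUnit_X_sub_C _ (hsq _ hdvd)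
  · by_cases hb : b = 0
    · have hc : c ≠ 0 := fun h => hbc ⟨hb, h⟩
      refine ⟨!![(a + d + s)/2 - d, (a + d - s)/2 - d; c, c], (a + d + s)/2, (a + d - s)/2,
        ?_, ?_⟩
      · rw [Matrix.isUnit_iff_isUnit_det, Matrix.det_fin_two_of, isUnit_iff_ne_zero]
        have h4 : ((a + d + s)/2 - d) * c - ((a + d - s)/2 - d) * c = c * s := by ring
        rw [h4]
        exact mul_ne_zero hc hs0
      · subst hb
        ext i j
        fin_cases i <;> fin_cases j <;>
          simp [Matrix.mul_apply, Fin.sum_univ_two, Matrix.diagonal] <;>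
          ring_nf <;>
          (first
            | rfl
            | ring1
            | linear_combination hs / 4
            | linear_combination -hs / 4
            | linear_combination hs / 2
            | linear_combination -hs / 2)
    · refine ⟨!![b, b; (a + d + s)/2 - a, (a + d - s)/2 - a], (a + d + s)/2, (a + d - s)/2,
        ?_, ?_⟩
      · rw [Matrix.isUnit_iff_isUnit_det, Matrix.det_fin_two_of, isUnit_iff_ne_zero]
        have h4 : b * ((a + d - s)/2 - a) - b * ((a + d + s)/2 - a) = -(b * s) := by ring
        rw [h4, neg_ne_zero]
        exact mul_ne_zero hb hs0
      · ext i j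
        fin_cases i <;> fin_cases j <;>
          simp [Matrix.mul_apply, Fin.sum_univ_two, Matrix.diagonal] <;>
          ring_nf <;>
          (first
            | rfl
            | ring1
            | linear_combination hs / 4
            | linear_combination -hs / 4
            | linear_combination hs / 2
            | linear_combination -hs / 2)

end CrossAux

/-- A diagonalizable cross matrix can be diagonalized by a cross matrix:
if `X = W D₀ W⁻¹` for some invertible `W` and diagonal `D₀`, then there exist
an invertible cross matrix `V` and a diagonal matrix `D` with `X = V D V⁻¹`. -/
theorem crossMatrix_diagonalization {n : ℕ}
    (X : Matrix (Fin n) (Fin n) ℂ) (hX : IsCrossMatrix X)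
    (W D₀ : Matrix (Fin n) (Fin n) ℂ) (hW : IsUnit W) (hD₀ : D₀.IsDiag)
    (hdiag : X = W * D₀ * W⁻¹) :
    ∃ V D : Matrix (Fin n) (Fin n) ℂ,
      IsUnit V ∧ IsCrossMatrix V ∧ D.IsDiag ∧ X = V * D * V⁻¹ := by
  classical
  have hrevval : ∀ k : Fin n, (Fin.rev k : ℕ) = n - (k + 1) := fun _ => rfl
  have hXc : CrossFun X := by
    intro k l h1 h2
    refine hX k l h1 fun hc => h2 (Fin.ext ?_)
    have := hrevval k
    have hkn := k.isLt
    omega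
  -- the squarefree polynomial annihilating X
  set S : Finset ℂ := Finset.image (fun i => D₀ i i) Finset.univ with hS
  set p : ℂ[X] := ∏ lam ∈ S, (Polynomial.X - C lam) with hpdef
  have hsq : Squarefree p := by
    rw [hpdef]
    exact (separable_prod_X_sub_C_iff'.mpr fun x _ y _ h => h).squarefree
  have hpD : aeval D₀ p = 0 := by
    have hD : D₀ = Matrix.diagonal fun i => D₀ i i := by
      ext i j
      by_cases h : i = j
      · subst h; simp
      · rw [Matrix.diagonal_apply_ne _ h, hD₀ h]
    rw [hD, crossAux_aeval_diagonal]
    have hzero : ∀ i : Fin n, p.eval (D₀ i i) = 0 := by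
      intro i
      rw [hpdef, eval_prod]
      exact Finset.prod_eq_zero (Finset.mem_image_of_mem _ (Finset.mem_univ i)) (by simp)
    rw [show (fun i => p.eval (D₀ i i)) = fun _ => (0 : ℂ) from funext hzero]
    simp [Matrix.diagonal_zero]
  have hpX : aeval X p = 0 := by
    obtain ⟨w, hw⟩ := hW
    have hWinv : W⁻¹ = (↑w⁻¹ : Matrix (Fin n) (Fin n) ℂ) := by
      rw [← hw, Matrix.coe_units_inv]
    rw [hdiag, hWinv, ← hw, crossAux_aeval_conj, hpD, mul_zero, zero_mul]
  -- choose the 2×2 diagonalizations of the blocks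
  have H : ∀ i : Fin n, ∃ (P : Matrix (Fin 2) (Fin 2) ℂ) (e₀ e₁ : ℂ), IsUnit P ∧
      ((i : ℕ) < (i.rev : ℕ) → !![X i i, X i i.rev; X i.rev i, X i.rev i.rev] * P
        = P * Matrix.diagonal ![e₀, e₁]) := by
    intro i
    by_cases hlt : (i : ℕ) < (i.rev : ℕ)
    · have hi : i ≠ i.rev := fun h => by rw [← h] at hlt; exact lt_irrefl _ hlt
      obtain ⟨P, e₀, e₁, hPu, hPE⟩ :=
        crossAux_fin2 _ _ _ _ p hsq (crossAux_compress_aeval hXc hi hpX)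
      exact ⟨P, e₀, e₁, hPu, fun _ => hPE⟩
    · exact ⟨1, 0, 0, isUnit_one, fun h => absurd h hlt⟩
  choose P e₀ e₁ hPu hPE using H
  have hQ : ∀ i, P i * (P i)⁻¹ = 1 := fun i =>
    Matrix.mul_nonsing_inv _ ((Matrix.isUnit_iff_isUnit_det _).mp (hPu i))
  have hQ' : ∀ i, (P i)⁻¹ * P i = 1 := fun i =>
    Matrix.nonsing_inv_mul _ ((Matrix.isUnit_iff_isUnit_det _).mp (hPu i))
  set Q : Fin n → Matrix (Fin 2) (Fin 2) ℂ := fun i => (P i)⁻¹ with hQdef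
  -- build V, V', and the diagonal
  set V : Matrix (Fin n) (Fin n) ℂ := Matrix.of fun k l =>
    if (k : ℕ) < (k.rev : ℕ) then
      (if l = k then P k 0 0 else if l = k.rev then P k 0 1 else 0)
    else if (k.rev : ℕ) < (k : ℕ) then
      (if l = k.rev then P k.rev 1 0 else if l = k then P k.rev 1 1 else 0)
    else (if l = k then 1 else 0) with hVdef
  set V' : Matrix (Fin n) (Fin n) ℂ := Matrix.of fun k l =>
    if (k : ℕ) < (k.rev : ℕ) then
      (if l = k then Q k 0 0 else if l = k.rev then Q k 0 1 else 0)
    else if (k.rev : ℕ) < (k : ℕ) then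
      (if l = k.rev then Q k.rev 1 0 else if l = k then Q k.rev 1 1 else 0)
    else (if l = k then 1 else 0) with hV'def
  set dfun : Fin n → ℂ := fun k =>
    if (k : ℕ) < (k.rev : ℕ) then e₀ k
    else if (k.rev : ℕ) < (k : ℕ) then e₁ k.rev else X k k with hdfun
  -- entry lemmas for V and V'
  have hVlow : ∀ k l : Fin n, (k : ℕ) < (k.rev : ℕ) →
      V k l = if l = k then P k 0 0 else if l = k.rev then P k 0 1 else 0 := by
    intro k l h
    rw [hVdef, Matrix.of_apply, if_pos h]
  have hVhigh : ∀ k l : Fin n, (k.rev : ℕ) < (k : ℕ) →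
      V k l = if l = k.rev then P k.rev 1 0 else if l = k then P k.rev 1 1 else 0 := by
    intro k l h
    rw [hVdef, Matrix.of_apply, if_neg (by omega), if_pos h]
  have hVmid : ∀ k l : Fin n, (k : ℕ) = (k.rev : ℕ) →
      V k l = if l = k then 1 else 0 := by
    intro k l h
    rw [hVdef, Matrix.of_apply, if_neg (by omega), if_neg (by omega)]
  have hV'low : ∀ k l : Fin n, (k : ℕ) < (k.rev : ℕ) →
      V' k l = if l = k then Q k 0 0 else if l = k.rev then Q k 0 1 else 0 := by
    intro k l h
    rw [hV'def, Matrix.of_apply, if_pos h]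
  have hV'high : ∀ k l : Fin n, (k.rev : ℕ) < (k : ℕ) →
      V' k l = if l = k.rev then Q k.rev 1 0 else if l = k then Q k.rev 1 1 else 0 := by
    intro k l h
    rw [hV'def, Matrix.of_apply, if_neg (by omega), if_pos h]
  have hV'mid : ∀ k l : Fin n, (k : ℕ) = (k.rev : ℕ) →
      V' k l = if l = k then 1 else 0 := by
    intro k l h
    rw [hV'def, Matrix.of_apply, if_neg (by omega), if_neg (by omega)]
  have hVc : CrossFun V := by
    intro k l h1 h2
    rcases lt_trichotomy ((k : ℕ)) ((k.rev : ℕ)) with h | h | h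
    · rw [hVlow k l h, if_neg h1, if_neg h2]
    · rw [hVmid k l h, if_neg h1]
    · rw [hVhigh k l h, if_neg h2, if_neg h1]
  have hV'c : CrossFun V' := by
    intro k l h1 h2
    rcases lt_trichotomy ((k : ℕ)) ((k.rev : ℕ)) with h | h | h
    · rw [hV'low k l h, if_neg h1, if_neg h2]
    · rw [hV'mid k l h, if_neg h1]
    · rw [hV'high k l h, if_neg h2, if_neg h1]
  have hne_of_lt : ∀ k : Fin n, (k : ℕ) < (k.rev : ℕ) → k ≠ k.rev :=
    fun k h he => by rw [← he] at h; exact lt_irrefl _ h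
  have hne_of_gt : ∀ k : Fin n, (k.rev : ℕ) < (k : ℕ) → k ≠ k.rev :=
    fun k h he => by rw [← he] at h; exact lt_irrefl _ h
  have hrevne : ∀ k : Fin n, k ≠ k.rev → k.rev ≠ k := fun k h he => h he.symm
  -- main equation : X * V = V * diagonal dfun
  have main : X * V = V * Matrix.diagonal dfun := by
    ext k l
    rw [Matrix.mul_diagonal]
    rcases lt_trichotomy ((k : ℕ)) ((k.rev : ℕ)) with hlt | heq | hgt
    · have hk := hne_of_lt k hlt
      have hrr : k.rev.rev = k := Fin.rev_rev k
      have hlt' : ((k.rev).rev : ℕ) < ((k.rev) : ℕ) := by rw [hrr]; exact hlt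
      obtain ⟨E1, E2, E3, E4⟩ := crossAux_blockEq (hPE k hlt)
      rw [crossAux_mul_apply hk (hXc k) l, hVlow k l hlt, hVhigh k.rev l hlt', hrr]
      by_cases hl1 : l = k
      · subst hl1
        rw [if_pos rfl, if_pos rfl, hdfun]
        simp only [if_pos hlt]
        exact E1
      · by_cases hl2 : l = k.rev
        · subst hl2
          rw [if_neg hl1, if_pos rfl, if_neg hl1, if_pos rfl, hdfun]
          simp only []
          rw [if_neg (by omega), if_pos (by omega), hrr]
          exact E2
        · rw [if_neg hl1, if_neg hl2, if_neg hl1, if_neg hl2]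
          ring
    · have hkeq : k = k.rev := Fin.ext heq
      rw [crossAux_mul_apply_mid hkeq (hXc k) l, hVmid k l heq]
      by_cases hl : l = k
      · subst hl
        rw [if_pos rfl, hdfun]
        simp only []
        rw [if_neg (by omega), if_neg (by omega)]
        ring
      · rw [if_neg hl]
        ring
    · have hk := hne_of_gt k hgt
      have hrr : k.rev.rev = k := Fin.rev_rev k
      have hlt' : ((k.rev) : ℕ) < ((k.rev).rev : ℕ) := by rw [hrr]; exact hgt
      obtain ⟨E1, E2, E3, E4⟩ := crossAux_blockEq (hPE k.rev hlt')
      rw [hrr] at E1 E2 E3 E4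
      rw [crossAux_mul_apply hk (hXc k) l, hVhigh k l hgt, hVlow k.rev l hlt', hrr]
      by_cases hl1 : l = k.rev
      · subst hl1
        rw [if_pos rfl, if_pos rfl, hdfun]
        simp only []
        rw [if_pos (by omega)]
        linear_combination E3
      · by_cases hl2 : l = k
        · subst hl2
          rw [if_neg hl1, if_pos rfl, if_neg hl1, if_pos rfl, hdfun]
          simp only []
          rw [if_neg (by omega), if_pos (by omega)]
          linear_combination E4
        · rw [if_neg hl1, if_neg hl2, if_neg hl1, if_neg hl2]
          ring
  -- V * V' = 1
  have hVV' : V * V' = 1 := by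
    ext k l
    rcases lt_trichotomy ((k : ℕ)) ((k.rev : ℕ)) with hlt | heq | hgt
    · have hk := hne_of_lt k hlt
      have hrr : k.rev.rev = k := Fin.rev_rev k
      have hlt' : ((k.rev).rev : ℕ) < ((k.rev) : ℕ) := by rw [hrr]; exact hlt
      obtain ⟨F1, F2, F3, F4⟩ := crossAux_oneEq (hQ k)
      rw [crossAux_mul_apply hk (hVc k) l, hVlow k k hlt, hVlow k k.rev hlt,
        hV'low k l hlt, hV'high k.rev l hlt', hrr]
      rw [if_pos rfl, if_neg (hrevne k hk), if_pos rfl]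
      by_cases hl1 : l = k
      · subst hl1
        rw [if_pos rfl, if_pos rfl, Matrix.one_apply_eq]
        exact F1
      · by_cases hl2 : l = k.rev
        · subst hl2
          rw [if_neg hl1, if_pos rfl, if_neg hl1, if_pos rfl,
            Matrix.one_apply_ne (fun h => hl1 h.symm)]
          exact F2
        · rw [if_neg hl1, if_neg hl2, if_neg hl1, if_neg hl2,
            Matrix.one_apply_ne (fun h => hl1 h.symm)]
          ring
    · have hkeq : k = k.rev := Fin.ext heq
      rw [crossAux_mul_apply_mid hkeq (hVc k) l, hVmid k k heq, hV'mid k l heq, if_pos rfl]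
      by_cases hl : l = k
      · subst hl
        rw [if_pos rfl, Matrix.one_apply_eq, one_mul]
      · rw [if_neg hl, Matrix.one_apply_ne (fun h => hl h.symm), mul_zero]
    · have hk := hne_of_gt k hgt
      have hrr : k.rev.rev = k := Fin.rev_rev k
      have hlt' : ((k.rev) : ℕ) < ((k.rev).rev : ℕ) := by rw [hrr]; exact hgt
      obtain ⟨F1, F2, F3, F4⟩ := crossAux_oneEq (hQ k.rev)
      rw [crossAux_mul_apply hk (hVc k) l, hVhigh k k hgt, hVhigh k k.rev hgt,
        hV'high k l hgt, hV'low k.rev l hlt', hrr]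
      rw [if_neg hk, if_pos rfl, if_pos rfl]
      by_cases hl1 : l = k.rev
      · subst hl1
        rw [if_pos rfl, if_neg (hrevne k hk), if_pos rfl,
          Matrix.one_apply_ne hk]
        linear_combination F3
      · by_cases hl2 : l = k
        · subst hl2
          rw [if_neg hl1, if_pos rfl, if_neg hl1, if_pos rfl, Matrix.one_apply_eq]
          linear_combination F4
        · rw [if_neg hl1, if_neg hl2, if_neg hl2, if_neg hl1,
            Matrix.one_apply_ne (fun h => hl2 h.symm)]
          ring
  -- conclusion
  refine ⟨V, Matrix.diagonal dfun, (Matrix.isUnit_iff_isUnit_det _).mpr (Matrix.isUnit_det_of_right_inverse hVV'), ?_,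
    Matrix.isDiag_diagonal _, ?_⟩
  · intro i j h1 h2
    refine hVc i j h1 fun hc => h2 ?_
    subst hc
    have := hrevval i
    have := i.isLt
    omega
  · rw [Matrix.inv_eq_right_inv hVV']
    calc X = X * (V * V') := by rw [hVV', mul_one]
      _ = X * V * V' := by rw [mul_assoc]
      _ = V * Matrix.diagonal dfun * V' := by rw [main]
end

section
/- Let X be an n×n complex cross matrix. Then there exist n×n complex matrices U, Σ, V such that X = U · Σ · Vᴴ, U and V are unitary cross matrices, and Σ is a diagonal matrix whose diagonal entries are nonnegative real numbers. -/
open Matrix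

namespace CrossSVD

set_option maxHeartbeats 1000000

open Complex

local notation "conj" => starRingEnd ℂ

/-! ### SVD of a 2×2 complex matrix -/

lemma svd2_col_orth (B : Matrix (Fin 2) (Fin 2) ℂ)
    (h : conj (B 0 0) * B 0 1 + conj (B 1 0) * B 1 1 = 0) :
    ∃ U S : Matrix (Fin 2) (Fin 2) ℂ, B = U * S ∧ Uᴴ * U = 1 ∧ S.IsDiag ∧
      ∀ k, ∃ r : ℝ, 0 ≤ r ∧ S k k = (r : ℂ) := by
  set n0 : ℝ := Real.sqrt (normSq (B 0 0) + normSq (B 1 0)) with hn0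
  set n1 : ℝ := Real.sqrt (normSq (B 0 1) + normSq (B 1 1)) with hn1
  have hn0nn : 0 ≤ n0 := Real.sqrt_nonneg _
  have hn1nn : 0 ≤ n1 := Real.sqrt_nonneg _
  have hn0sq : n0 ^ 2 = normSq (B 0 0) + normSq (B 1 0) := by
    rw [hn0, Real.sq_sqrt (add_nonneg (normSq_nonneg _) (normSq_nonneg _))]
  have hn1sq : n1 ^ 2 = normSq (B 0 1) + normSq (B 1 1) := by
    rw [hn1, Real.sq_sqrt (add_nonneg (normSq_nonneg _) (normSq_nonneg _))]
  have c0 : (n0:ℂ)^2 = conj (B 0 0) * B 0 0 + conj (B 1 0) * B 1 0 := by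
    rw [← normSq_eq_conj_mul_self, ← normSq_eq_conj_mul_self, ← ofReal_pow, hn0sq]
    push_cast; ring
  have c1 : (n1:ℂ)^2 = conj (B 0 1) * B 0 1 + conj (B 1 1) * B 1 1 := by
    rw [← normSq_eq_conj_mul_self, ← normSq_eq_conj_mul_self, ← ofReal_pow, hn1sq]
    push_cast; ring
  have h' : B 0 0 * conj (B 0 1) + B 1 0 * conj (B 1 1) = 0 := by
    simpa using congrArg conj h
  have hzero0 : n0 = 0 → B 0 0 = 0 ∧ B 1 0 = 0 := by
    intro h0
    have : normSq (B 0 0) + normSq (B 1 0) = 0 := by rw [← hn0sq, h0]; ring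
    constructor <;>
      · rw [← normSq_eq_zero]
        nlinarith [normSq_nonneg (B 0 0), normSq_nonneg (B 1 0)]
  have hzero1 : n1 = 0 → B 0 1 = 0 ∧ B 1 1 = 0 := by
    intro h0
    have : normSq (B 0 1) + normSq (B 1 1) = 0 := by rw [← hn1sq, h0]; ring
    constructor <;>
      · rw [← normSq_eq_zero]
        nlinarith [normSq_nonneg (B 0 1), normSq_nonneg (B 1 1)]
  by_cases h0 : n0 = 0 <;> by_cases h1 : n1 = 0
  · -- B = 0
    obtain ⟨e1, e2⟩ := hzero0 h0; obtain ⟨e3, e4⟩ := hzero1 h1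
    refine ⟨1, 0, ?_, by simp, Matrix.isDiag_zero, fun k => ⟨0, le_refl _, by simp⟩⟩
    ext i j; fin_cases i <;> fin_cases j <;> simp [e1, e2, e3, e4]
  · -- col0 = 0, col1 ≠ 0
    obtain ⟨e1, e2⟩ := hzero0 h0
    have hne : (n1 : ℂ) ≠ 0 := by exact_mod_cast h1
    refine ⟨!![-(conj (B 1 1)) / n1, B 0 1 / n1; conj (B 0 1) / n1, B 1 1 / n1],
      diagonal ![0, (n1 : ℂ)], ?_, ?_, Matrix.isDiag_diagonal _, ?_⟩
    · ext i j
      fin_cases i <;> fin_cases j <;>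
        simp [Matrix.mul_diagonal, e1, e2] <;> field_simp
    · ext i j
      fin_cases i <;> fin_cases j <;>
        simp only [Matrix.mul_apply, Fin.sum_univ_two, Matrix.conjTranspose_apply,
          Matrix.one_apply, Fin.isValue, Matrix.cons_val', Matrix.cons_val_zero,
          Matrix.cons_val_one, Matrix.head_cons, Matrix.empty_val',
          Matrix.cons_val_fin_one, Matrix.head_fin_const, map_div₀, map_neg,
          Complex.conj_ofReal, Complex.conj_conj, reduceIte,
          Matrix.of_apply, Fin.zero_eta, Fin.mk_one, Complex.star_def,
          zero_ne_one, one_ne_zero, if_false] <;>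
        field_simp <;>
        first
          | ring1
          | linear_combination c1 | linear_combination -c1
          | linear_combination c0 | linear_combination -c0
          | linear_combination h | linear_combination -h
          | linear_combination h' | linear_combination -h'
          | linear_combination 2*c1 | linear_combination 2*c0
    · intro k; fin_cases k
      · exact ⟨0, le_refl _, by simp⟩
      · exact ⟨n1, hn1nn, by simp⟩
  · -- col1 = 0, col0 ≠ 0
    obtain ⟨e1, e2⟩ := hzero1 h1
    have hne : (n0 : ℂ) ≠ 0 := by exact_mod_cast h0
    refine ⟨!![B 0 0 / n0, -(conj (B 1 0)) / n0; B 1 0 / n0, conj (B 0 0) / n0],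
      diagonal ![(n0 : ℂ), 0], ?_, ?_, Matrix.isDiag_diagonal _, ?_⟩
    · ext i j
      fin_cases i <;> fin_cases j <;>
        simp [Matrix.mul_diagonal, e1, e2] <;> field_simp
    · ext i j
      fin_cases i <;> fin_cases j <;>
        simp only [Matrix.mul_apply, Fin.sum_univ_two, Matrix.conjTranspose_apply,
          Matrix.one_apply, Fin.isValue, Matrix.cons_val', Matrix.cons_val_zero,
          Matrix.cons_val_one, Matrix.head_cons, Matrix.empty_val',
          Matrix.cons_val_fin_one, Matrix.head_fin_const, map_div₀, map_neg,
          Complex.conj_ofReal, Complex.conj_conj, reduceIte,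
          Matrix.of_apply, Fin.zero_eta, Fin.mk_one, Complex.star_def,
          zero_ne_one, one_ne_zero, if_false] <;>
        field_simp <;>
        first
          | ring1
          | linear_combination c1 | linear_combination -c1
          | linear_combination c0 | linear_combination -c0
          | linear_combination h | linear_combination -h
          | linear_combination h' | linear_combination -h'
          | linear_combination 2*c1 | linear_combination 2*c0
    · intro k; fin_cases k
      · exact ⟨n0, hn0nn, by simp⟩
      · exact ⟨0, le_refl _, by simp⟩
  · -- both nonzero
    have hne0 : (n0 : ℂ) ≠ 0 := by exact_mod_cast h0
    have hne1 : (n1 : ℂ) ≠ 0 := by exact_mod_cast h1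
    refine ⟨!![B 0 0 / n0, B 0 1 / n1; B 1 0 / n0, B 1 1 / n1],
      diagonal ![(n0 : ℂ), (n1 : ℂ)], ?_, ?_, Matrix.isDiag_diagonal _, ?_⟩
    · ext i j
      fin_cases i <;> fin_cases j <;>
        simp [Matrix.mul_diagonal] <;> field_simp
    · ext i j
      fin_cases i <;> fin_cases j <;>
        simp only [Matrix.mul_apply, Fin.sum_univ_two, Matrix.conjTranspose_apply,
          Matrix.one_apply, Fin.isValue, Matrix.cons_val', Matrix.cons_val_zero,
          Matrix.cons_val_one, Matrix.head_cons, Matrix.empty_val',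
          Matrix.cons_val_fin_one, Matrix.head_fin_const, map_div₀,
          Complex.conj_ofReal, reduceIte,
          Matrix.of_apply, Fin.zero_eta, Fin.mk_one, Complex.star_def,
          zero_ne_one, one_ne_zero, if_false] <;>
        field_simp <;>
        first
          | ring1
          | linear_combination c1 | linear_combination -c1
          | linear_combination c0 | linear_combination -c0
          | linear_combination h | linear_combination -h
          | linear_combination h' | linear_combination -h'
          | linear_combination 2*c1 | linear_combination 2*c0
    · intro k; fin_cases k
      · exact ⟨n0, hn0nn, by simp⟩
      · exact ⟨n1, hn1nn, by simp⟩

lemma svd2 (A : Matrix (Fin 2) (Fin 2) ℂ) :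
    ∃ U S V : Matrix (Fin 2) (Fin 2) ℂ, A = U * S * Vᴴ ∧ Uᴴ * U = 1 ∧ Vᴴ * V = 1 ∧
      S.IsDiag ∧ ∀ k, ∃ r : ℝ, 0 ≤ r ∧ S k k = (r : ℂ) := by
  set r : ℂ := conj (A 0 0) * A 0 1 + conj (A 1 0) * A 1 1 with hr
  by_cases hr0 : r = 0
  · obtain ⟨U, S, hB, hU, hS, hSr⟩ := svd2_col_orth A (hr ▸ hr0)
    exact ⟨U, S, 1, by simpa using hB, hU, by simp, hS, hSr⟩
  · set p : ℝ := normSq (A 0 0) + normSq (A 1 0) with hp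
    set q : ℝ := normSq (A 0 1) + normSq (A 1 1) with hq
    set nr : ℝ := normSq r with hnr
    have hnrpos : 0 < nr := by
      rw [hnr]; exact normSq_pos.mpr hr0
    set d : ℝ := Real.sqrt ((p - q)^2 + 4*nr) with hd
    have hdsq : d^2 = (p - q)^2 + 4*nr := by
      rw [hd, Real.sq_sqrt (by positivity)]
    set e : ℝ := (q - p + d)/2 with he
    set f : ℝ := (q - p - d)/2 with hf
    have hef : e * f = -nr := by
      have h2 : (q - p + d)/2 * ((q - p - d)/2) = ((q-p)^2 - d^2)/4 := by ring
      rw [he, hf, h2, hdsq]; ring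
    have hefs : e + f = q - p := by rw [he, hf]; ring
    set mP : ℝ := Real.sqrt (nr + e^2) with hmP
    set mM : ℝ := Real.sqrt (nr + f^2) with hmM
    have hmPpos : 0 < mP := Real.sqrt_pos.mpr (by positivity)
    have hmMpos : 0 < mM := Real.sqrt_pos.mpr (by positivity)
    have hmPsq : mP^2 = nr + e^2 := by rw [hmP, Real.sq_sqrt (by positivity)]
    have hmMsq : mM^2 = nr + f^2 := by rw [hmM, Real.sq_sqrt (by positivity)]
    have hmP0 : (mP : ℂ) ≠ 0 := by exact_mod_cast hmPpos.ne'
    have hmM0 : (mM : ℂ) ≠ 0 := by exact_mod_cast hmMpos.ne'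
    have hrr : conj r * r = (nr : ℂ) := by
      rw [hnr]; rw [normSq_eq_conj_mul_self]
    have cef : (e : ℂ) * (f : ℂ) = -(nr : ℂ) := by exact_mod_cast congrArg (Complex.ofReal) hef
    have cefs : (e : ℂ) + (f : ℂ) = (q : ℂ) - (p : ℂ) := by exact_mod_cast congrArg (Complex.ofReal) hefs
    have cmP : (mP : ℂ)^2 = (nr : ℂ) + (e : ℂ)^2 := by exact_mod_cast congrArg (Complex.ofReal) hmPsq
    have cmM : (mM : ℂ)^2 = (nr : ℂ) + (f : ℂ)^2 := by exact_mod_cast congrArg (Complex.ofReal) hmMsq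
    have cp : (p : ℂ) = conj (A 0 0) * A 0 0 + conj (A 1 0) * A 1 0 := by
      rw [hp]; push_cast; rw [normSq_eq_conj_mul_self, normSq_eq_conj_mul_self]
    have cq : (q : ℂ) = conj (A 0 1) * A 0 1 + conj (A 1 1) * A 1 1 := by
      rw [hq]; push_cast; rw [normSq_eq_conj_mul_self, normSq_eq_conj_mul_self]
    have hrc : conj r = conj (A 0 1) * A 0 0 + conj (A 1 1) * A 1 0 := by
      rw [hr]; simp only [map_add, _root_.map_mul, Complex.conj_conj]; ring
    set V : Matrix (Fin 2) (Fin 2) ℂ :=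
      !![r/mP, r/mM; (e:ℂ)/mP, (f:ℂ)/mM] with hV
    have hVunit : Vᴴ * V = 1 := by
      ext i j
      fin_cases i <;> fin_cases j <;>
        simp only [hV, Matrix.mul_apply, Fin.sum_univ_two, Matrix.conjTranspose_apply,
          Matrix.one_apply, Fin.isValue, Matrix.cons_val', Matrix.cons_val_zero,
          Matrix.cons_val_one, Matrix.head_cons, Matrix.empty_val',
          Matrix.cons_val_fin_one, Matrix.head_fin_const, map_div₀,
          Complex.conj_ofReal, reduceIte,
          Matrix.of_apply, Fin.zero_eta, Fin.mk_one, Complex.star_def,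
          zero_ne_one, one_ne_zero, if_false] <;>
        field_simp <;>
        first
          | linear_combination hrr - cmP | linear_combination hrr + cef
          | linear_combination hrr - cmM
          | linear_combination 2*hrr - 2*cmP | linear_combination 2*(hrr + cef)
          | linear_combination 2*hrr - 2*cmM
          | ring1
    have hVVH : V * Vᴴ = 1 := mul_eq_one_comm.mp hVunit
    set B : Matrix (Fin 2) (Fin 2) ℂ := A * V with hB
    have hBorth : conj (B 0 0) * B 0 1 + conj (B 1 0) * B 1 1 = 0 := by
      have hB00 : B 0 0 = A 0 0 * (r/mP) + A 0 1 * ((e:ℂ)/mP) := by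
        rw [hB]; simp [Matrix.mul_apply, Fin.sum_univ_two, hV]
      have hB10 : B 1 0 = A 1 0 * (r/mP) + A 1 1 * ((e:ℂ)/mP) := by
        rw [hB]; simp [Matrix.mul_apply, Fin.sum_univ_two, hV]
      have hB01 : B 0 1 = A 0 0 * (r/mM) + A 0 1 * ((f:ℂ)/mM) := by
        rw [hB]; simp [Matrix.mul_apply, Fin.sum_univ_two, hV]
      have hB11 : B 1 1 = A 1 0 * (r/mM) + A 1 1 * ((f:ℂ)/mM) := by
        rw [hB]; simp [Matrix.mul_apply, Fin.sum_univ_two, hV]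
      rw [hB00, hB10, hB01, hB11]
      simp only [map_add, _root_.map_mul, map_div₀, Complex.conj_ofReal]
      field_simp
      have key : (conj (A 0 0) * conj r + conj (A 0 1) * (e:ℂ)) * (A 0 0 * r + A 0 1 * (f:ℂ)) +
          (conj (A 1 0) * conj r + conj (A 1 1) * (e:ℂ)) * (A 1 0 * r + A 1 1 * (f:ℂ)) = 0 := by
        linear_combination (-(f:ℂ) * conj r) * hr + (-(e:ℂ) * r) * hrc
          + (conj (A 0 0) * A 0 0 + conj (A 1 0) * A 1 0 + (e:ℂ) + (f:ℂ)) * hrr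
          + (conj (A 0 1) * A 0 1 + conj (A 1 1) * A 1 1) * cef
          + (nr:ℂ) * cefs + (-(nr:ℂ)) * cp + (nr:ℂ) * cq
      first
        | linear_combination key
        | linear_combination (mP:ℂ) * (mM:ℂ) * key
        | linear_combination (mP:ℂ)^2 * (mM:ℂ)^2 * key
        | linear_combination key / ((mP:ℂ) * (mM:ℂ))
    obtain ⟨U, S, hBUS, hU, hS, hSr⟩ := svd2_col_orth B hBorth
    refine ⟨U, S, V, ?_, hU, hVunit, hS, hSr⟩
    calc A = A * (V * Vᴴ) := by rw [hVVH, Matrix.mul_one]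
    _ = (A * V) * Vᴴ := by rw [Matrix.mul_assoc]
    _ = U * S * Vᴴ := by rw [← hB, hBUS]

/-! ### Assembling cross matrices from 2×2 blocks -/

variable {n : ℕ}

noncomputable def asm (u : Fin n → Matrix (Fin 2) (Fin 2) ℂ) (w : Fin n → ℂ) :
    Matrix (Fin n) (Fin n) ℂ :=
  fun i j =>
    if (i : ℕ) < (i.rev : ℕ) then
      (if j = i then u i 0 0 else if j = i.rev then u i 0 1 else 0)
    else if (i.rev : ℕ) < (i : ℕ) then
      (if j = i.rev then u i.rev 1 0 else if j = i then u i.rev 1 1 else 0)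
    else (if j = i then w i else 0)

variable (u : Fin n → Matrix (Fin 2) (Fin 2) ℂ) (w : Fin n → ℂ) {i j : Fin n}

lemma ne_rev_of_lt (h : (i : ℕ) < (i.rev : ℕ)) : i ≠ i.rev :=
  fun hc => absurd (congrArg Fin.val hc) (Nat.ne_of_lt h)

lemma asm_ne (hji : j ≠ i) (hjr : j ≠ i.rev) : asm u w i j = 0 := by
  unfold asm
  split_ifs with h1 h2 <;> simp [if_neg hji, if_neg hjr]

lemma asm_lt_00 (h : (i : ℕ) < (i.rev : ℕ)) : asm u w i i = u i 0 0 := by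
  unfold asm; rw [if_pos h, if_pos rfl]

lemma asm_lt_01 (h : (i : ℕ) < (i.rev : ℕ)) : asm u w i i.rev = u i 0 1 := by
  unfold asm
  rw [if_pos h, if_neg (ne_rev_of_lt h).symm, if_pos rfl]

lemma asm_lt_10 (h : (i : ℕ) < (i.rev : ℕ)) : asm u w i.rev i = u i 1 0 := by
  unfold asm
  rw [if_neg (by rw [Fin.rev_rev]; omega), if_pos (by rwa [Fin.rev_rev]),
    if_pos (by rw [Fin.rev_rev])]
  rw [Fin.rev_rev]

lemma asm_lt_11 (h : (i : ℕ) < (i.rev : ℕ)) : asm u w i.rev i.rev = u i 1 1 := by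
  unfold asm
  rw [if_neg (by rw [Fin.rev_rev]; omega), if_pos (by rwa [Fin.rev_rev]),
    if_neg (by rw [Fin.rev_rev]; exact (ne_rev_of_lt h).symm), if_pos rfl]
  rw [Fin.rev_rev]

lemma asm_center (h : i = i.rev) : asm u w i i = w i := by
  unfold asm
  have h1 : ¬ (i : ℕ) < (i.rev : ℕ) := by rw [← h]; omega
  have h2 : ¬ (i.rev : ℕ) < (i : ℕ) := by rw [← h]; omega
  rw [if_neg h1, if_neg h2, if_pos rfl]

lemma isCross_asm : IsCrossMatrix (asm u w) := by
  intro i j hji hsum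
  refine asm_ne u w hji fun hc => hsum ?_
  have := congrArg Fin.val hc
  rw [Fin.val_rev] at this
  omega

lemma eq_rev_iff : j = i.rev ↔ (i : ℕ) + (j : ℕ) + 1 = n := by
  rw [Fin.ext_iff, Fin.val_rev]
  omega

lemma rev_eq_self_of_eq (h : (i : ℕ) = (i.rev : ℕ)) : i = i.rev := Fin.val_injective h

lemma sum_pair_support {f : Fin n → ℂ} (hij : i ≠ j)
    (h : ∀ k, k ≠ i → k ≠ j → f k = 0) : ∑ k, f k = f i + f j := by
  rw [← Finset.sum_pair hij]
  exact (Finset.sum_subset (Finset.subset_univ _)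
    (fun k _ hk => by
      simp only [Finset.mem_insert, Finset.mem_singleton, not_or] at hk
      exact h k hk.1 hk.2)).symm

lemma mul_isDiag_apply {m : ℕ} {M S : Matrix (Fin m) (Fin m) ℂ} (hS : S.IsDiag) (i k : Fin m) :
    (M * S) i k = M i k * S k k := by
  rw [Matrix.mul_apply]
  exact Finset.sum_eq_single k (fun l _ hl => by rw [hS hl, mul_zero])
    (fun h => absurd (Finset.mem_univ k) h)

lemma triple_apply {m : ℕ} {M S N : Matrix (Fin m) (Fin m) ℂ} (hS : S.IsDiag) (i j : Fin m) :
    (M * S * Nᴴ) i j = ∑ k, M i k * S k k * conj (N j k) := by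
  rw [Matrix.mul_apply]
  exact Finset.sum_congr rfl fun k _ => by
    rw [mul_isDiag_apply hS, Matrix.conjTranspose_apply]; rfl

lemma asm_isDiag (s : Fin n → Matrix (Fin 2) (Fin 2) ℂ) (wS : Fin n → ℂ)
    (hsd : ∀ i, (s i).IsDiag) : (asm s wS).IsDiag := by
  intro i j hij
  by_cases hjr : j = i.rev
  · subst hjr
    rcases Nat.lt_trichotomy (i : ℕ) (i.rev : ℕ) with h | h | h
    · rw [asm_lt_01 _ _ h]; exact hsd i (by decide)
    · exact absurd (rev_eq_self_of_eq h) hij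
    · have h' : ((i.rev : Fin n) : ℕ) < ((i.rev).rev : ℕ) := by rwa [Fin.rev_rev]
      have e : asm s wS ((i.rev).rev) (i.rev) = s i.rev 1 0 := asm_lt_10 s wS h'
      rw [Fin.rev_rev] at e
      rw [e]; exact hsd i.rev (by decide)
  · exact asm_ne s wS (Ne.symm hij) hjr

lemma asm_unitary (hu : ∀ i, (u i)ᴴ * u i = 1) (hw : ∀ i, conj (w i) * w i = 1) :
    (asm u w)ᴴ * asm u w = 1 := by
  have huentry : ∀ i (a b : Fin 2),
      conj (u i 0 a) * u i 0 b + conj (u i 1 a) * u i 1 b = if a = b then 1 else 0 := by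
    intro i a b
    have h := hu i
    rw [← Matrix.ext_iff] at h
    have h2 := h a b
    rw [Matrix.mul_apply, Fin.sum_univ_two, Matrix.conjTranspose_apply,
      Matrix.conjTranspose_apply, Matrix.one_apply] at h2
    exact h2
  ext a b
  have hentry : ((asm u w)ᴴ * asm u w) a b = ∑ k, conj (asm u w k a) * asm u w k b := by
    rw [Matrix.mul_apply]
    exact Finset.sum_congr rfl fun k _ => by rw [Matrix.conjTranspose_apply]; rfl
  rw [hentry]
  have hsupp : ∀ k, k ≠ a → k ≠ a.rev → conj (asm u w k a) * asm u w k b = 0 := by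
    intro k h1 h2
    have hz : asm u w k a = 0 :=
      asm_ne u w (Ne.symm h1) (fun hc => h2 (by rw [← Fin.rev_rev k, ← hc]))
    rw [hz, map_zero, zero_mul]
  rcases Nat.lt_trichotomy (a : ℕ) (a.rev : ℕ) with h | h | h
  · have hane : a ≠ a.rev := ne_rev_of_lt h
    rw [sum_pair_support hane hsupp, asm_lt_00 u w h, asm_lt_10 u w h]
    by_cases hb : b = a
    · subst hb
      rw [asm_lt_00 u w h, asm_lt_10 u w h, Matrix.one_apply_eq]
      simpa using huentry b 0 0
    · by_cases hbr : b = a.rev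
      · subst hbr
        rw [asm_lt_01 u w h, asm_lt_11 u w h, Matrix.one_apply_ne hane]
        simpa using huentry a 0 1
      · have e1 : asm u w a b = 0 := asm_ne u w hb hbr
        have e2 : asm u w a.rev b = 0 :=
          asm_ne u w hbr (by rw [Fin.rev_rev]; exact hb)
        rw [e1, e2, Matrix.one_apply_ne (Ne.symm hb)]
        ring
  · have haa : a = a.rev := rev_eq_self_of_eq h
    rw [Finset.sum_eq_single a
      (fun k _ hk => hsupp k hk (fun hc => hk (hc.trans haa.symm)))
      (fun hc => absurd (Finset.mem_univ a) hc)]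
    rw [asm_center u w haa]
    by_cases hb : b = a
    · subst hb
      rw [asm_center u w haa, Matrix.one_apply_eq]
      exact hw b
    · have e : asm u w a b = 0 := asm_ne u w hb (fun hc => hb (hc.trans haa.symm))
      rw [e, Matrix.one_apply_ne (Ne.symm hb), mul_zero]
  · obtain ⟨c, rfl⟩ : ∃ c : Fin n, a = c.rev := ⟨a.rev, (Fin.rev_rev a).symm⟩
    rw [Fin.rev_rev] at h hsupp
    have hlt : (c : ℕ) < (c.rev : ℕ) := h
    have hcne : c.rev ≠ c := (ne_rev_of_lt hlt).symm
    rw [sum_pair_support hcne hsupp, asm_lt_11 u w hlt, asm_lt_01 u w hlt]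
    by_cases hb : b = c.rev
    · subst hb
      rw [asm_lt_11 u w hlt, asm_lt_01 u w hlt, Matrix.one_apply_eq]
      have h2 := huentry c 1 1
      rw [if_pos rfl] at h2
      linear_combination h2
    · by_cases hbc : b = c
      · subst hbc
        rw [asm_lt_10 u w hlt, asm_lt_00 u w hlt, Matrix.one_apply_ne hcne]
        have h2 := huentry b 1 0
        rw [if_neg (by decide)] at h2
        linear_combination h2
      · have e1 : asm u w c.rev b = 0 :=
          asm_ne u w hb (by rw [Fin.rev_rev]; exact hbc)
        have e2 : asm u w c b = 0 := asm_ne u w hbc hb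
        rw [e1, e2, Matrix.one_apply_ne (Ne.symm hb)]
        ring

lemma asm_mul (X : Matrix (Fin n) (Fin n) ℂ)
    (hX' : ∀ i j : Fin n, j ≠ i → j ≠ i.rev → X i j = 0)
    (s v : Fin n → Matrix (Fin 2) (Fin 2) ℂ) (wU wS wV : Fin n → ℂ)
    (hsd : ∀ i, (s i).IsDiag)
    (hblock : ∀ (i : Fin n) (a b : Fin 2), (i : ℕ) < (i.rev : ℕ) →
      (!![X i i, X i i.rev; X i.rev i, X i.rev i.rev] : Matrix (Fin 2) (Fin 2) ℂ) a b
        = u i a 0 * s i 0 0 * conj (v i b 0) + u i a 1 * s i 1 1 * conj (v i b 1))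
    (hcen : ∀ i : Fin n, i = i.rev → X i i = wU i * wS i * conj (wV i)) :
    X = asm u wU * asm s wS * (asm v wV)ᴴ := by
  have hSd : (asm s wS).IsDiag := asm_isDiag s wS hsd
  ext i j
  rw [triple_apply hSd]
  have hsupp : ∀ k, k ≠ i → k ≠ i.rev →
      asm u wU i k * asm s wS k k * conj (asm v wV j k) = 0 := by
    intro k h1 h2
    rw [asm_ne u wU h1 h2, zero_mul, zero_mul]
  rcases Nat.lt_trichotomy (i : ℕ) (i.rev : ℕ) with h | h | h
  · have hine : i ≠ i.rev := ne_rev_of_lt h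
    rw [sum_pair_support hine hsupp, asm_lt_00 u wU h, asm_lt_01 u wU h,
      asm_lt_00 s wS h, asm_lt_11 s wS h]
    by_cases hj : j = i
    · subst hj
      rw [asm_lt_00 v wV h, asm_lt_01 v wV h]
      have hb := hblock j 0 0 h
      simp at hb
      linear_combination hb
    · by_cases hjr : j = i.rev
      · subst hjr
        rw [asm_lt_10 v wV h, asm_lt_11 v wV h]
        have hb := hblock i 0 1 h
        simp at hb
        linear_combination hb
      · have e1 : asm v wV j i = 0 :=
          asm_ne v wV (fun hc => hj hc.symm)
            (fun hc => hjr (by rw [← Fin.rev_rev j, ← hc]))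
        have e2 : asm v wV j i.rev = 0 :=
          asm_ne v wV (fun hc => hjr hc.symm)
            (fun hc => hj ((Fin.rev_injective hc).symm))
        rw [e1, e2, hX' i j hj hjr]
        simp
  · have hii : i = i.rev := rev_eq_self_of_eq h
    rw [Finset.sum_eq_single i
      (fun k _ hk => hsupp k hk (fun hc => hk (hc.trans hii.symm)))
      (fun hc => absurd (Finset.mem_univ i) hc)]
    rw [asm_center u wU hii, asm_center s wS hii]
    by_cases hj : j = i
    · subst hj
      rw [asm_center v wV hii]
      exact hcen j hii
    · have e : asm v wV j i = 0 :=
        asm_ne v wV (fun hc => hj hc.symm)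
          (fun hc => hj (by rw [← Fin.rev_rev j, ← hc, ← hii]))
      rw [e, hX' i j hj (fun hc => hj (hc.trans hii.symm))]
      simp
  · obtain ⟨c, rfl⟩ : ∃ c : Fin n, i = c.rev := ⟨i.rev, (Fin.rev_rev i).symm⟩
    rw [Fin.rev_rev] at h hsupp
    have hlt : (c : ℕ) < (c.rev : ℕ) := h
    have hcne : c.rev ≠ c := (ne_rev_of_lt hlt).symm
    rw [sum_pair_support hcne hsupp, asm_lt_11 u wU hlt, asm_lt_10 u wU hlt,
      asm_lt_11 s wS hlt, asm_lt_00 s wS hlt]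
    by_cases hj : j = c.rev
    · subst hj
      rw [asm_lt_11 v wV hlt, asm_lt_10 v wV hlt]
      have hb := hblock c 1 1 hlt
      simp at hb
      linear_combination hb
    · by_cases hjc : j = c
      · subst hjc
        rw [asm_lt_01 v wV hlt, asm_lt_00 v wV hlt]
        have hb := hblock j 1 0 hlt
        simp at hb
        linear_combination hb
      · have e1 : asm v wV j c.rev = 0 :=
          asm_ne v wV (fun hc => hj hc.symm)
            (fun hc => hjc ((Fin.rev_injective hc).symm))
        have e2 : asm v wV j c = 0 :=
          asm_ne v wV (fun hc => hjc hc.symm)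
            (fun hc => hj (by rw [← Fin.rev_rev j, ← hc]))
        rw [e1, e2, hX' c.rev j hj (by rwa [Fin.rev_rev])]
        simp

end CrossSVD

open CrossSVD

/-- A cross matrix has a singular value decomposition `X = U Σ Vᴴ` in which
both unitary factors `U` and `V` are cross matrices and `Σ` is diagonal with
nonnegative real diagonal entries. -/
theorem crossMatrix_svd {n : ℕ}
    (X : Matrix (Fin n) (Fin n) ℂ) (hX : IsCrossMatrix X) :
    ∃ U S V : Matrix (Fin n) (Fin n) ℂ,
      X = U * S * Vᴴ ∧
      Uᴴ * U = 1 ∧ Vᴴ * V = 1 ∧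
      IsCrossMatrix U ∧ IsCrossMatrix V ∧
      S.IsDiag ∧ (∀ i : Fin n, ∃ r : ℝ, 0 ≤ r ∧ S i i = (r : ℂ)) := by
  classical
  have key : ∀ i : Fin n, ∃ u s v : Matrix (Fin 2) (Fin 2) ℂ,
      (!![X i i, X i i.rev; X i.rev i, X i.rev i.rev] : Matrix (Fin 2) (Fin 2) ℂ)
        = u * s * vᴴ ∧ uᴴ * u = 1 ∧ vᴴ * v = 1 ∧ s.IsDiag ∧
        ∀ k, ∃ r : ℝ, 0 ≤ r ∧ s k k = (r : ℂ) := fun i => svd2 _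
  choose u s v hA hu hv hsd hsr using key
  set wU : Fin n → ℂ := fun i => if X i i = 0 then 1 else X i i / ‖X i i‖ with hwU
  set wS : Fin n → ℂ := fun i => (‖X i i‖ : ℂ) with hwS
  set wV : Fin n → ℂ := fun _ => 1 with hwV
  have hX' : ∀ i j : Fin n, j ≠ i → j ≠ i.rev → X i j = 0 := by
    intro i j h1 h2
    exact hX i j h1 (fun hc => h2 (eq_rev_iff.mpr hc))
  have hblock : ∀ (i : Fin n) (a b : Fin 2), (i : ℕ) < (i.rev : ℕ) →
      (!![X i i, X i i.rev; X i.rev i, X i.rev i.rev] : Matrix (Fin 2) (Fin 2) ℂ) a b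
        = u i a 0 * s i 0 0 * (starRingEnd ℂ) (v i b 0)
          + u i a 1 * s i 1 1 * (starRingEnd ℂ) (v i b 1) := by
    intro i a b _
    have h := hA i
    rw [← Matrix.ext_iff] at h
    rw [h a b, triple_apply (hsd i), Fin.sum_univ_two]
  have hcen : ∀ i : Fin n, i = i.rev → X i i = wU i * wS i * (starRingEnd ℂ) (wV i) := by
    intro i _
    simp only [hwU, hwS, hwV, _root_.map_one, mul_one]
    split_ifs with hz
    · simp [hz]
    · have hne : (‖X i i‖ : ℂ) ≠ 0 := by
        simpa using (norm_ne_zero_iff.mpr hz)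
      field_simp
  have hwUunit : ∀ i : Fin n, (starRingEnd ℂ) (wU i) * wU i = 1 := by
    intro i
    simp only [hwU]
    split_ifs with hz
    · simp
    · have hne : (‖X i i‖ : ℂ) ≠ 0 := by
        simpa using (norm_ne_zero_iff.mpr hz)
      rw [map_div₀, Complex.conj_ofReal]
      field_simp
      rw [← Complex.normSq_eq_conj_mul_self, ← Complex.sq_norm]
      push_cast
      ring
  have hwVunit : ∀ i : Fin n, (starRingEnd ℂ) (wV i) * wV i = 1 := by
    intro i; rw [hwV]; simp
  refine ⟨asm u wU, asm s wS, asm v wV, ?_, ?_, ?_, ?_, ?_, ?_, ?_⟩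
  · exact asm_mul u X hX' s v wU wS wV hsd hblock hcen
  · exact asm_unitary u wU hu hwUunit
  · exact asm_unitary v wV hv hwVunit
  · exact isCross_asm u wU
  · exact isCross_asm v wV
  · exact asm_isDiag s wS hsd
  · intro i
    rcases Nat.lt_trichotomy (i : ℕ) (i.rev : ℕ) with h | h | h
    · rw [asm_lt_00 s wS h]
      exact hsr i 0
    · rw [asm_center s wS (rev_eq_self_of_eq h), hwS]
      exact ⟨‖X i i‖, norm_nonneg _, rfl⟩
    · obtain ⟨c, rfl⟩ : ∃ c : Fin n, i = c.rev := ⟨i.rev, (Fin.rev_rev i).symm⟩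
      rw [Fin.rev_rev] at h
      rw [asm_lt_11 s wS h]
      exact hsr c 1
end
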